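/- arXiv:2002.10598 — 8 statements merged into one kernel-verified Lean document; each statement's English description precedes it below -/
import Mathlib

section
/- Let σ be a finite nonempty sequence with terms in {1,2,3,4} whose last term is 1. Then there exist a unique integer p ≥ 0 and unique basic sequences λ⁰, λ¹, …, λᵖ ∈ Λ such that σ = λ⁰λ¹⋯λᵖ. -/
/-- All terms of the list are equal to `4`. -/
def AllFours (γ : List ℕ) : Prop := ∀ a ∈ γ, a = 4

/-- Basic sequences: `1, 21, 22, 23, 24`, or `xγ1, xγ2, xγ31, xγ32, xγ33, xγ34`
for `x ∈ {3,4}` and `γ` a (possibly empty) all-4 sequence. -/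
def IsBasic (l : List ℕ) : Prop :=
  l = [1] ∨ l = [2, 1] ∨ l = [2, 2] ∨ l = [2, 3] ∨ l = [2, 4] ∨
    ∃ (x : ℕ) (γ e : List ℕ), (x = 3 ∨ x = 4) ∧ AllFours γ ∧
      (e = [1] ∨ e = [2] ∨ e = [3, 1] ∨ e = [3, 2] ∨ e = [3, 3] ∨ e = [3, 4]) ∧
      l = x :: (γ ++ e)

/-- "ends in 1" -/
def EndsOne (σ : List ℕ) : Prop := ∃ τ, σ = τ ++ [1]

def Opt (e : List ℕ) : Prop :=
  e = [1] ∨ e = [2] ∨ e = [3, 1] ∨ e = [3, 2] ∨ e = [3, 3] ∨ e = [3, 4]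

lemma endsOne_ne {σ : List ℕ} (h : EndsOne σ) : σ ≠ [] := by
  rcases h with ⟨τ, rfl⟩; simp

lemma endsOne_suffix : ∀ (a r : List ℕ), EndsOne (a ++ r) → r ≠ [] → EndsOne r := by
  intro a
  induction a with
  | nil => intro r h _; simpa using h
  | cons c a ih =>
    intro r h hr
    rcases h with ⟨τ, hτ⟩
    cases τ with
    | nil =>
      simp at hτ
      exact absurd hτ.2 (by simp [hr])
    | cons t τ' =>
      simp at hτ
      exact ih r ⟨τ', hτ.2⟩ hr

lemma endsOne_cons_ne {c : ℕ} {ρ : List ℕ} (h : EndsOne (c :: ρ)) (hc : c ≠ 1) : ρ ≠ [] := by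
  rintro rfl
  rcases h with ⟨τ, hτ⟩
  cases τ with
  | nil => simp at hτ; exact hc hτ
  | cons t τ' => simp at hτ

lemma tail_decomp : ∀ ρ : List ℕ, (∀ a ∈ ρ, a ∈ ({1, 2, 3, 4} : Set ℕ)) → EndsOne ρ →
    ∃ γ e r, AllFours γ ∧ Opt e ∧ ρ = γ ++ e ++ r ∧ (r = [] ∨ EndsOne r) := by
  intro ρ
  induction ρ with
  | nil => intro _ h; exact absurd rfl (endsOne_ne h)
  | cons c ρ' ih =>
    intro hmem hE
    have hc : c = 1 ∨ c = 2 ∨ c = 3 ∨ c = 4 := by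
      have := hmem c (by simp); simpa using this
    have hrest : ρ' = [] ∨ EndsOne ρ' := by
      rcases eq_or_ne ρ' [] with h | h
      · exact Or.inl h
      · exact Or.inr (endsOne_suffix [c] ρ' (by simpa using hE) h)
    rcases hc with rfl | rfl | rfl | rfl
    · exact ⟨[], [1], ρ', by simp [AllFours], Or.inl rfl, by simp, hrest⟩
    · exact ⟨[], [2], ρ', by simp [AllFours], Or.inr (Or.inl rfl), by simp, hrest⟩
    · -- c = 3
      have hne : ρ' ≠ [] := endsOne_cons_ne hE (by norm_num)
      rcases ρ' with _ | ⟨d, r⟩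
      · exact absurd rfl hne
      have hd : d = 1 ∨ d = 2 ∨ d = 3 ∨ d = 4 := by
        have := hmem d (by simp); simpa using this
      have hr : r = [] ∨ EndsOne r := by
        rcases eq_or_ne r [] with h | h
        · exact Or.inl h
        · exact Or.inr (endsOne_suffix [3, d] r (by simpa using hE) h)
      refine ⟨[], [3, d], r, by simp [AllFours], ?_, by simp, hr⟩
      rcases hd with rfl | rfl | rfl | rfl
      · exact Or.inr (Or.inr (Or.inl rfl))
      · exact Or.inr (Or.inr (Or.inr (Or.inl rfl)))
      · exact Or.inr (Or.inr (Or.inr (Or.inr (Or.inl rfl))))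
      · exact Or.inr (Or.inr (Or.inr (Or.inr (Or.inr rfl))))
    · -- c = 4
      have hne : ρ' ≠ [] := endsOne_cons_ne hE (by norm_num)
      have hE' : EndsOne ρ' := hrest.resolve_left hne
      obtain ⟨γ, e, r, hγ, he, heq, hr⟩ :=
        ih (fun a ha => hmem a (by simp [ha])) hE'
      refine ⟨4 :: γ, e, r, ?_, he, by simp [heq], hr⟩
      intro a ha
      rcases List.mem_cons.mp ha with rfl | ha
      · rfl
      · exact hγ a ha

lemma exists_decomp : ∀ n (ρ : List ℕ), ρ.length ≤ n →
    (∀ a ∈ ρ, a ∈ ({1, 2, 3, 4} : Set ℕ)) → EndsOne ρ →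
    ∃ L : List (List ℕ), (∀ l ∈ L, IsBasic l) ∧ L.flatten = ρ := by
  intro n
  induction n with
  | zero =>
    intro ρ hlen _ hE
    have := endsOne_ne hE
    simp [List.length_eq_zero_iff] at hlen
    exact absurd hlen this
  | succ n ih =>
    intro ρ hlen hmem hE
    rcases ρ with _ | ⟨c, ρ'⟩
    · exact absurd rfl (endsOne_ne hE)
    have hc : c = 1 ∨ c = 2 ∨ (c = 3 ∨ c = 4) := by
      have := hmem c (by simp); simpa using this
    have hmem' : ∀ a ∈ ρ', a ∈ ({1, 2, 3, 4} : Set ℕ) :=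
      fun a ha => hmem a (by simp [ha])
    rcases hc with rfl | rfl | hc34
    · -- c = 1
      rcases eq_or_ne ρ' [] with rfl | hne
      · exact ⟨[[1]], by simp [IsBasic], by simp⟩
      · have hE' : EndsOne ρ' := endsOne_suffix [1] ρ' (by simpa using hE) hne
        have hlen' : ρ'.length ≤ n := by simp at hlen; omega
        obtain ⟨L, hL, hf⟩ := ih ρ' hlen' hmem' hE'
        refine ⟨[1] :: L, ?_, by simp [hf]⟩
        intro l hl
        rcases List.mem_cons.mp hl with rfl | hl
        · exact Or.inl rfl
        · exact hL l hl
    · -- c = 2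
      have hne : ρ' ≠ [] := endsOne_cons_ne hE (by norm_num)
      rcases ρ' with _ | ⟨d, r⟩
      · exact absurd rfl hne
      have hd : d = 1 ∨ d = 2 ∨ d = 3 ∨ d = 4 := by
        have := hmem d (by simp); simpa using this
      have hbasic : IsBasic [2, d] := by
        rcases hd with rfl | rfl | rfl | rfl
        · exact Or.inr (Or.inl rfl)
        · exact Or.inr (Or.inr (Or.inl rfl))
        · exact Or.inr (Or.inr (Or.inr (Or.inl rfl)))
        · exact Or.inr (Or.inr (Or.inr (Or.inr (Or.inl rfl))))
      rcases eq_or_ne r [] with rfl | hner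
      · exact ⟨[[2, d]], by simpa using hbasic, by simp⟩
      · have hEr : EndsOne r := endsOne_suffix [2, d] r (by simpa using hE) hner
        have hlenr : r.length ≤ n := by simp at hlen; omega
        obtain ⟨L, hL, hf⟩ := ih r hlenr (fun a ha => hmem' a (by simp [ha])) hEr
        refine ⟨[2, d] :: L, ?_, by simp [hf]⟩
        intro l hl
        rcases List.mem_cons.mp hl with rfl | hl
        · exact hbasic
        · exact hL l hl
    · -- c = 3 or c = 4
      have hne : ρ' ≠ [] := endsOne_cons_ne hE (by omega)
      have hE' : EndsOne ρ' := endsOne_suffix [c] ρ' (by simpa using hE) hne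
      obtain ⟨γ, e, r, hγ, he, heq, hr⟩ := tail_decomp ρ' hmem' hE'
      have hbasic : IsBasic (c :: (γ ++ e)) :=
        Or.inr (Or.inr (Or.inr (Or.inr (Or.inr ⟨c, γ, e, hc34, hγ, he, rfl⟩))))
      have helen : 1 ≤ e.length := by
        rcases he with rfl | rfl | rfl | rfl | rfl | rfl <;> simp
      rcases hr with rfl | hEr
      · exact ⟨[c :: (γ ++ e)], by simpa using hbasic, by simp [heq]⟩
      · have hlenr : r.length ≤ n := by
          have := hlen
          simp [heq] at this; omega
        obtain ⟨L, hL, hf⟩ := ih r hlenr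
          (fun a ha => hmem' a (by simp [heq, ha])) hEr
        refine ⟨(c :: (γ ++ e)) :: L, ?_, by simp [hf, heq]⟩
        intro l hl
        rcases List.mem_cons.mp hl with rfl | hl
        · exact hbasic
        · exact hL l hl

lemma opt_eq {e e' r r' : List ℕ} (he : Opt e) (he' : Opt e')
    (h : e ++ r = e' ++ r') : e = e' ∧ r = r' := by
  rcases he with rfl | rfl | rfl | rfl | rfl | rfl <;>
    rcases he' with rfl | rfl | rfl | rfl | rfl | rfl <;> simp_all

lemma opt_head {e : List ℕ} (he : Opt e) : ∃ h t, e = h :: t ∧ h ≠ 4 := by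
  rcases he with rfl | rfl | rfl | rfl | rfl | rfl <;> exact ⟨_, _, rfl, by norm_num⟩

lemma gamma_eq : ∀ γ γ' e e' r r' : List ℕ, AllFours γ → AllFours γ' →
    Opt e → Opt e' → γ ++ (e ++ r) = γ' ++ (e' ++ r') → γ = γ' ∧ e = e' ∧ r = r' := by
  intro γ
  induction γ with
  | nil =>
    intro γ' e e' r r' _ hγ' he he' h
    cases γ' with
    | nil =>
      obtain ⟨h1, h2⟩ := opt_eq he he' (by simpa using h)
      exact ⟨rfl, h1, h2⟩
    | cons c γ₀ =>
      have hc : c = 4 := hγ' c (by simp)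
      obtain ⟨hd, t, rfl, hhd⟩ := opt_head he
      simp only [List.nil_append, List.cons_append, List.cons.injEq] at h
      exact absurd (h.1.trans hc) hhd
  | cons c γ₀ ih =>
    intro γ' e e' r r' hγ hγ' he he' h
    have hc : c = 4 := hγ c (by simp)
    cases γ' with
    | nil =>
      obtain ⟨hd, t, rfl, hhd⟩ := opt_head he'
      simp only [List.nil_append, List.cons_append, List.cons.injEq] at h
      exact absurd (h.1.symm.trans hc) hhd
    | cons c' γ₀' =>
      have hc' : c' = 4 := hγ' c' (by simp)
      simp only [List.cons_append, List.cons.injEq] at h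
      obtain ⟨h1, h2, h3⟩ := ih γ₀' e e' r r' (fun a ha => hγ a (by simp [ha]))
        (fun a ha => hγ' a (by simp [ha])) he he' h.2
      exact ⟨by rw [h.1, h1], h2, h3⟩

lemma basic_cases {l : List ℕ} (h : IsBasic l) :
    l = [1] ∨ (∃ c, l = [2, c]) ∨
      ∃ x γ e, (x = 3 ∨ x = 4) ∧ AllFours γ ∧ Opt e ∧ l = x :: (γ ++ e) := by
  rcases h with rfl | rfl | rfl | rfl | rfl | ⟨x, γ, e, hx, hγ, he, rfl⟩
  · exact Or.inl rfl
  · exact Or.inr (Or.inl ⟨1, rfl⟩)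
  · exact Or.inr (Or.inl ⟨2, rfl⟩)
  · exact Or.inr (Or.inl ⟨3, rfl⟩)
  · exact Or.inr (Or.inl ⟨4, rfl⟩)
  · exact Or.inr (Or.inr ⟨x, γ, e, hx, hγ, he, rfl⟩)

lemma first_eq {l l' r r' : List ℕ} (h : IsBasic l) (h' : IsBasic l')
    (heq : l ++ r = l' ++ r') : l = l' ∧ r = r' := by
  rcases basic_cases h with rfl | ⟨c, rfl⟩ | ⟨x, γ, e, hx, hγ, he, rfl⟩ <;>
    rcases basic_cases h' with rfl | ⟨c', rfl⟩ | ⟨x', γ', e', hx', hγ', he', rfl⟩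
  · simpa using heq
  · simp at heq
  · simp only [List.cons_append, List.cons.injEq, List.nil_append] at heq
    rcases hx' with rfl | rfl <;> omega
  · simp at heq
  · simp only [List.cons_append, List.cons.injEq] at heq
    obtain ⟨h1, h2, h3⟩ := heq
    exact ⟨by rw [h2], h3⟩
  · simp only [List.cons_append, List.cons.injEq] at heq
    rcases hx' with rfl | rfl <;> omega
  · simp only [List.cons_append, List.cons.injEq, List.nil_append] at heq
    rcases hx with rfl | rfl <;> omega
  · simp only [List.cons_append, List.cons.injEq] at heq
    rcases hx with rfl | rfl <;> omega
  · simp only [List.cons_append, List.cons.injEq, List.append_assoc] at heq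
    obtain ⟨h1, h2⟩ := heq
    obtain ⟨g1, g2, g3⟩ := gamma_eq γ γ' e e' r r' hγ hγ' he he' h2
    exact ⟨by rw [h1, g1, g2], g3⟩

lemma basic_ne_nil {l : List ℕ} (h : IsBasic l) : l ≠ [] := by
  rcases h with rfl | rfl | rfl | rfl | rfl | ⟨x, γ, e, _, _, _, rfl⟩ <;> simp

lemma uniq_decomp : ∀ n (L L' : List (List ℕ)), L.flatten.length ≤ n →
    (∀ l ∈ L, IsBasic l) → (∀ l ∈ L', IsBasic l) → L.flatten = L'.flatten → L = L' := by
  intro n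
  induction n with
  | zero =>
    intro L L' hlen hL hL' hf
    cases L with
    | cons l T =>
      have h1 := basic_ne_nil (hL l (by simp))
      simp at hlen
      exact absurd hlen.1 (by simpa [List.length_eq_zero_iff] using h1)
    | nil =>
      cases L' with
      | nil => rfl
      | cons l' T' =>
        have := basic_ne_nil (hL' l' (by simp))
        simp at hf
        exact absurd hf.1 this
  | succ n ih =>
    intro L L' hlen hL hL' hf
    cases L with
    | nil =>
      cases L' with
      | nil => rfl
      | cons l' T' =>
        have := basic_ne_nil (hL' l' (by simp))
        simp at hf
        exact absurd hf.1 this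
    | cons l T =>
      cases L' with
      | nil =>
        have := basic_ne_nil (hL l (by simp))
        simp at hf
        exact absurd hf.1 this
      | cons l' T' =>
        simp only [List.flatten_cons] at hf
        obtain ⟨h1, h2⟩ := first_eq (hL l (by simp)) (hL' l' (by simp)) hf
        have hlne : l ≠ [] := basic_ne_nil (hL l (by simp))
        have hlen' : T.flatten.length ≤ n := by
          rw [List.flatten_cons, List.length_append] at hlen
          have : 1 ≤ l.length := List.length_pos_iff.mpr hlne
          omega
        have := ih T T' hlen' (fun a ha => hL a (by simp [ha]))
          (fun a ha => hL' a (by simp [ha])) h2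
        simp [h1, this]

/-- Every nonempty sequence over `{1,2,3,4}` ending in `1` decomposes uniquely as a
concatenation of basic sequences. -/
theorem unique_basic_decomposition (σ : List ℕ) (hne : σ ≠ [])
    (hmem : ∀ a ∈ σ, a ∈ ({1, 2, 3, 4} : Set ℕ)) (hlast : σ.getLast hne = 1) :
    ∃! L : List (List ℕ), (∀ l ∈ L, IsBasic l) ∧ L.flatten = σ := by
  have hE : EndsOne σ := ⟨σ.dropLast, by
    conv_lhs => rw [← List.dropLast_append_getLast hne]
    rw [hlast]⟩
  obtain ⟨L, hL, hf⟩ := exists_decomp σ.length σ le_rfl hmem hE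
  refine ⟨L, ⟨hL, hf⟩, ?_⟩
  rintro L' ⟨hL', hf'⟩
  exact uniq_decomp σ.length L' L (by simp [hf']) hL' hL (by rw [hf, hf'])
end

section
/- If G is a graph, S a P₃-hull set of G, and u, v are adjacent vertices each of degree 2 in G, then u ∈ S or v ∈ S. -/
open SimpleGraph

variable {V : Type*}

/-- The `P₃`-interval operator: add every vertex with at least two neighbors in `S`. -/
def pInterval (G : SimpleGraph V) (S : Set V) : Set V :=
  S ∪ {v | ∃ u w, u ≠ w ∧ u ∈ S ∧ w ∈ S ∧ G.Adj u v ∧ G.Adj w v}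

/-- `pIter G S k = I^k[S]`. -/
def pIter (G : SimpleGraph V) (S : Set V) : ℕ → Set V
  | 0 => S
  | k + 1 => pInterval G (pIter G S k)

/-- `S` is a `P₃`-hull set of `G` (it percolates `G`). -/
def Percolates (G : SimpleGraph V) (S : Set V) : Prop :=
  ∃ k, pIter G S k = Set.univ

/-- Percolation time of a hull set `S`. -/
noncomputable def percTime (G : SimpleGraph V) (S : Set V) : ℕ :=
  sInf {k | pIter G S k = Set.univ}

/-- The least `k` such that `x ∈ I^k[S]`. -/
noncomputable def percTimeAt (G : SimpleGraph V) (S : Set V) (x : V) : ℕ :=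
  sInf {k | x ∈ pIter G S k}

/-- The percolation time of `G`: the maximum percolation time over all hull sets. -/
noncomputable def percolationTime (G : SimpleGraph V) : ℕ :=
  sSup {t | ∃ S : Set V, Percolates G S ∧ percTime G S = t}

/-- A `P₃`-geodetic set: every vertex outside `S` has at least two neighbors in `S`. -/
def IsGeodetic (G : SimpleGraph V) (S : Set V) : Prop :=
  ∀ v, v ∉ S → ∃ u w, u ≠ w ∧ u ∈ S ∧ w ∈ S ∧ G.Adj u v ∧ G.Adj w v

/-- The `P₃`-geodetic number of `G`. -/
noncomputable def geodeticNumber (G : SimpleGraph V) : ℕ :=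
  sInf {n | ∃ S : Set V, IsGeodetic G S ∧ S.ncard = n}

/-- The `P₃`-hull number of `G`. -/
noncomputable def hullNumber (G : SimpleGraph V) : ℕ :=
  sInf {n | ∃ S : Set V, Percolates G S ∧ S.ncard = n}


lemma not_mem_pInterval_of_deg_two {V : Type*} [Fintype V]
    (G : SimpleGraph V) [DecidableRel G.Adj] (T : Set V) (a b : V)
    (hab : G.Adj a b) (hda : G.degree a = 2) (ha : a ∉ T) (hb : b ∉ T) :
    a ∉ pInterval G T := by
  haveI := Classical.decEq V
  rintro (hmem | ⟨x, y, hxy, hx, hy, hxa, hya⟩)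
  · exact ha hmem
  · have hxF : x ∈ G.neighborFinset a := by
      rw [SimpleGraph.mem_neighborFinset]; exact hxa.symm
    have hyF : y ∈ G.neighborFinset a := by
      rw [SimpleGraph.mem_neighborFinset]; exact hya.symm
    have hbF : b ∈ G.neighborFinset a := by
      rw [SimpleGraph.mem_neighborFinset]; exact hab
    have hsub : ({x, y} : Finset V) ⊆ G.neighborFinset a := by
      intro z hz
      rcases Finset.mem_insert.mp hz with rfl | hz
      · exact hxF
      · rw [Finset.mem_singleton] at hz; subst hz; exact hyF
    have heq : G.neighborFinset a = {x, y} := by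
      symm
      apply Finset.eq_of_subset_of_card_le hsub
      rw [Finset.card_pair hxy]
      exact le_of_eq hda
    rw [heq] at hbF
    rcases Finset.mem_insert.mp hbF with rfl | hbF
    · exact hb hx
    · rw [Finset.mem_singleton] at hbF; subst hbF; exact hb hy

/-- If `S` is a hull set and `u, v` are adjacent vertices of degree 2, then `u ∈ S` or `v ∈ S`. -/
theorem hull_set_mem_of_adj_degree_two {V : Type*} [Fintype V]
    (G : SimpleGraph V) [DecidableRel G.Adj] (S : Set V) (hS : Percolates G S)
    (u v : V) (hadj : G.Adj u v) (hu : G.degree u = 2) (hv : G.degree v = 2) :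
    u ∈ S ∨ v ∈ S := by
  by_contra h
  push_neg at h
  obtain ⟨hus, hvs⟩ := h
  have key : ∀ k, u ∉ pIter G S k ∧ v ∉ pIter G S k := by
    intro k
    induction k with
    | zero => exact ⟨hus, hvs⟩
    | succ k ih =>
      obtain ⟨ihu, ihv⟩ := ih
      exact ⟨not_mem_pInterval_of_deg_two G _ u v hadj hu ihu ihv,
        not_mem_pInterval_of_deg_two G _ v u hadj.symm hv ihv ihu⟩
  obtain ⟨k, hk⟩ := hS
  have := (key k).1
  rw [hk] at this
  exact this (Set.mem_univ u)
end

section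
/- Let G be a unit interval graph with a unit interval vertex order < (i.e., a linear order of V(G) in which the closed neighborhood of each vertex is an interval). If u < v and u = y₁, y₂, …, y_r = v is a shortest path from u to v, then y_i < y_{i+1} for every 1 ≤ i ≤ r−1. -/
open SimpleGraph

variable {V : Type*}

/-- A linear order on the vertices of `G` is a unit interval order if every closed
neighborhood is an interval of consecutive vertices. -/
def IsUnitIntervalOrder (G : SimpleGraph V) [LinearOrder V] : Prop :=
  ∀ v x y z : V, (x = v ∨ G.Adj v x) → (z = v ∨ G.Adj v z) → x ≤ y → y ≤ z →
    (y = v ∨ G.Adj v y)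

/-! In a unit interval order, the middle vertex of an induced path `a - b - c` lies strictly
between `a` and `c`: otherwise one end lies between the other end and `b`, and the closed
neighbourhood of that other end, being an interval containing `b`, would contain it. Three
consecutive vertices of a shortest walk form an induced path, so a shortest walk never changes
direction; it therefore moves monotonically from `u` towards `v`. -/

namespace SimpleGraph

variable {G : SimpleGraph V}

lemma Walk.ne_and_not_adj_of_length_cons_cons_eq_dist {u w x v : V} (h : G.Adj u w)
    (h' : G.Adj w x) (r : G.Walk x v) (hp : ((r.cons h').cons h).length = G.dist u v) :
    u ≠ x ∧ ¬G.Adj u x := by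
  simp only [Walk.length_cons] at hp
  refine ⟨?_, fun hux ↦ ?_⟩
  · rintro rfl
    have := G.dist_le r
    omega
  · have := G.dist_le (r.cons hux)
    simp only [Walk.length_cons] at this
    omega

lemma Walk.rel_of_support_isChain {R : V → V → Prop} [IsTrans V R] {u v : V} (p : G.Walk u v)
    (hp : p.support.IsChain R) (huv : u ≠ v) : R u v := by
  rw [List.isChain_iff_pairwise, ← p.cons_tail_support, List.pairwise_cons] at hp
  exact hp.1 v (p.end_mem_tail_support_of_ne huv)

namespace IsUnitIntervalOrder

variable [LinearOrder V]

lemma adj_of_mem_uIcc (hG : IsUnitIntervalOrder G) {a b c : V} (hab : G.Adj a b)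
    (hc : c ∈ Set.uIcc a b) (hca : c ≠ a) : G.Adj a c := by
  rw [Set.mem_uIcc] at hc
  rcases hc with ⟨hac, hcb⟩ | ⟨hbc, hca'⟩
  · exact (hG a a c b (.inl rfl) (.inr hab) hac hcb).resolve_left hca
  · exact (hG a b c a (.inr hab) (.inl rfl) hbc hca').resolve_left hca

lemma lt_iff_lt_of_adj_of_adj (hG : IsUnitIntervalOrder G) {a b c : V} (hab : G.Adj a b)
    (hbc : G.Adj b c) (hac : a ≠ c) (hnadj : ¬G.Adj a c) : a < b ↔ b < c := by
  have hc : c ∉ Set.uIcc a b := fun hc ↦ hnadj (hG.adj_of_mem_uIcc hab hc hac.symm)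
  have ha : a ∉ Set.uIcc c b := fun ha ↦ hnadj (hG.adj_of_mem_uIcc hbc.symm ha hac).symm
  grind [Set.mem_uIcc, hab.ne, hbc.ne]

lemma support_isChain_lt_or_gt (hG : IsUnitIntervalOrder G) {u v : V} (p : G.Walk u v)
    (hp : p.length = G.dist u v) : p.support.IsChain (· < ·) ∨ p.support.IsChain (· > ·) := by
  induction p with
  | nil => simp
  | @cons u w v h q ih =>
    have hq := ih (length_eq_dist_of_subwalk hp (q.isSubwalk_cons h))
    cases q with
    | nil => simpa using h.ne.lt_or_gt
    | @cons _ x _ h' r =>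
      obtain ⟨hux, hnadj⟩ := Walk.ne_and_not_adj_of_length_cons_cons_eq_dist h h' r hp
      have hdir := hG.lt_iff_lt_of_adj_of_adj h h' hux hnadj
      simp only [Walk.support_cons] at hq ⊢
      rw [← r.cons_tail_support] at hq ⊢
      simp only [List.isChain_cons_cons] at hq ⊢
      rcases hq with hq | hq
      · exact .inl ⟨hdir.mpr hq.1, hq⟩
      · exact .inr ⟨(h.ne.lt_or_gt.resolve_left fun huw ↦ (hdir.mp huw).asymm hq.1), hq⟩

end IsUnitIntervalOrder

end SimpleGraph

theorem shortest_path_monotone_general {V : Type*} [LinearOrder V] (G : SimpleGraph V)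
    (hG : IsUnitIntervalOrder G) (u v : V) (huv : u < v)
    (p : G.Walk u v) (hlen : p.length = G.dist u v) :
    p.support.Chain' (· < ·) := by
  refine (hG.support_isChain_lt_or_gt p hlen).resolve_right fun hgt ↦ ?_
  exact (p.rel_of_support_isChain hgt huv.ne).asymm huv

/-- In a unit interval order, every shortest path from `u` to `v` with `u < v` has
strictly increasing vertices. -/
theorem shortest_path_monotone {V : Type*} [LinearOrder V] (G : SimpleGraph V)
    (hG : IsUnitIntervalOrder G) (u v : V) (huv : u < v)
    (p : G.Walk u v) (hp : p.IsPath) (hlen : p.length = G.dist u v) :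
    p.support.Chain' (· < ·) :=
  shortest_path_monotone_general G hG u v huv p hlen
end

section
/- Let G be a connected unit interval graph with unit interval order <. If u < v < w, then d(u,v) ≤ d(u,w), where d denotes graph distance. -/
open SimpleGraph

variable {V : Type*}

/-- In a connected unit interval graph, `u < v < w` implies `d(u,v) ≤ d(u,w)`. -/
theorem dist_mono_of_unitInterval {V : Type*} [LinearOrder V] (G : SimpleGraph V)
    (hG : IsUnitIntervalOrder G) (hconn : G.Connected) (u v w : V)
    (huv : u < v) (hvw : v < w) : G.dist u v ≤ G.dist u w := by
  obtain ⟨p, hp⟩ := (hconn u w).exists_walk_length_eq_dist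
  set n := p.length with hn
  have hP : ∃ i, v ≤ p.getVert i := ⟨n, by rw [hn, p.getVert_length]; exact hvw.le⟩
  set i := Nat.find hP with hi
  have hvi : v ≤ p.getVert i := Nat.find_spec hP
  have hi0 : i ≠ 0 := by
    intro h
    rw [h, p.getVert_zero] at hvi
    exact absurd hvi (not_le.mpr huv)
  have hin : i ≤ n := Nat.find_le (by rw [hn, p.getVert_length]; exact hvw.le)
  have hprev : p.getVert (i - 1) < v :=
    lt_of_not_ge (Nat.find_min hP (Nat.sub_lt (Nat.pos_of_ne_zero hi0) one_pos))
  have hdistle : ∀ j, j ≤ n → G.dist u (p.getVert j) ≤ j := by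
    intro j hj
    induction j with
    | zero => simp [p.getVert_zero]
    | succ k ih =>
      have hk : k < n := Nat.lt_of_succ_le hj
      have hadj : G.Adj (p.getVert k) (p.getVert (k + 1)) := p.adj_getVert_succ hk
      have h1 : G.dist (p.getVert k) (p.getVert (k + 1)) = 1 :=
        dist_eq_one_iff_adj.mpr hadj
      have htri := hconn.dist_triangle (u := u) (v := p.getVert k) (w := p.getVert (k + 1))
      have := ih hk.le
      omega
  rcases eq_or_lt_of_le hvi with heq | hlt
  · calc G.dist u v = G.dist u (p.getVert i) := by rw [heq]
      _ ≤ i := hdistle i hin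
      _ ≤ n := hin
      _ = G.dist u w := hp
  · have hi1n : i - 1 < n := by omega
    have hadj : G.Adj (p.getVert (i - 1)) (p.getVert (i - 1 + 1)) := p.adj_getVert_succ hi1n
    rw [Nat.sub_add_cancel (Nat.pos_of_ne_zero hi0)] at hadj
    have hv : v = p.getVert (i - 1) ∨ G.Adj (p.getVert (i - 1)) v :=
      hG (p.getVert (i - 1)) (p.getVert (i - 1)) v (p.getVert i) (Or.inl rfl)
        (Or.inr hadj) hprev.le hlt.le
    rcases hv with h | h
    · exact absurd h.symm (ne_of_lt hprev)
    · have h1 : G.dist (p.getVert (i - 1)) v = 1 := dist_eq_one_iff_adj.mpr h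
      have htri := hconn.dist_triangle (u := u) (v := p.getVert (i - 1)) (w := v)
      have := hdistle (i - 1) (by omega)
      omega
end

section
/- If G is a connected unit interval graph with unit interval order <, with minimum vertex v_L and maximum vertex v_R, then diam(G) = d(v_L, v_R). -/
open SimpleGraph

variable {V : Type*}

private lemma walk_to_mid {V : Type*} [LinearOrder V] {G : SimpleGraph V}
    (hG : IsUnitIntervalOrder G) :
    ∀ {x z : V} (p : G.Walk x z) (y : V), x ≤ y → y ≤ z →
      ∃ q : G.Walk x y, q.length ≤ p.length := by
  intro x z p
  induction p with
  | nil =>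
    intro y h1 h2
    exact ⟨Walk.nil.copy rfl (le_antisymm h1 h2), by simp⟩
  | @cons u v w h p ih =>
    intro y hxy hyz
    rcases le_total y v with hyv | hvy
    · rcases hG u u y v (Or.inl rfl) (Or.inr h) hxy hyv with heq | hadj
      · exact ⟨Walk.nil.copy rfl heq.symm, by simp⟩
      · exact ⟨Walk.cons hadj Walk.nil, by simp⟩
    · obtain ⟨q, hq⟩ := ih y hvy hyz
      exact ⟨Walk.cons h q, by simpa using Nat.add_le_add_right hq 1⟩

private lemma mid_to_walk {V : Type*} [LinearOrder V] {G : SimpleGraph V}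
    (hG : IsUnitIntervalOrder G) :
    ∀ {x z : V} (p : G.Walk x z) (y : V), x ≤ y → y ≤ z →
      ∃ q : G.Walk y z, q.length ≤ p.length := by
  intro x z p
  induction p with
  | nil =>
    intro y h1 h2
    exact ⟨Walk.nil.copy rfl (le_antisymm h2 h1), by simp⟩
  | @cons u v w h p ih =>
    intro y hxy hyz
    rcases le_total v y with hvy | hyv
    · obtain ⟨q, hq⟩ := ih y hvy hyz
      exact ⟨q, by simpa using le_trans hq (Nat.le_succ _)⟩
    · rcases hG v u y v (Or.inr h.symm) (Or.inl rfl) hxy hyv with heq | hadj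
      · exact ⟨p.copy heq.symm rfl, by simp⟩
      · exact ⟨Walk.cons hadj.symm p, by simp⟩

/-- In a connected unit interval graph, the diameter equals the distance between the
leftmost and rightmost vertices. -/
theorem diam_eq_dist_extremes {V : Type*} [LinearOrder V] (G : SimpleGraph V)
    (hG : IsUnitIntervalOrder G) (hconn : G.Connected) (vL vR : V)
    (hL : ∀ x, vL ≤ x) (hR : ∀ x, x ≤ vR) :
    G.diam = G.dist vL vR := by
  have key : ∀ u v : V, u ≤ v → G.edist u v ≤ G.edist vL vR := by
    intro u v huv
    obtain ⟨p, hp⟩ := hconn.exists_walk_length_eq_edist vL vR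
    obtain ⟨q, hq⟩ := mid_to_walk hG p u (hL u) (hR u)
    obtain ⟨r, hr⟩ := walk_to_mid hG q v huv (hR v)
    calc G.edist u v ≤ r.length := edist_le r
      _ ≤ (p.length : ℕ∞) := by exact_mod_cast le_trans hr hq
      _ = G.edist vL vR := hp
  have hed : G.ediam = G.edist vL vR := by
    refine le_antisymm (ediam_le_of_edist_le fun u v => ?_) edist_le_ediam
    rcases le_total u v with h | h
    · exact key u v h
    · exact (edist_comm ▸ key v u h :)
  rw [SimpleGraph.diam, hed]; rfl
end

section
/- Let G be a 2-connected chordal graph. If u and v are two vertices with at least one common neighbor, then {u,v} is a P₃-hull set of G. -/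
open SimpleGraph

variable {V : Type*}

/-- `G` is 2-connected: at least three vertices, connected, and no cut vertex. -/
def TwoConnected (G : SimpleGraph V) [Fintype V] : Prop :=
  3 ≤ Fintype.card V ∧ G.Connected ∧ ∀ v : V, (G.induce ({v}ᶜ : Set V)).Connected

/-- `G` is chordal: no induced cycle of length at least 4. -/
def IsChordal (G : SimpleGraph V) : Prop :=
  ∀ n : ℕ, 4 ≤ n → IsEmpty (cycleGraph n ↪g G)

/-!
Let `H` be the `P₃`-hull of `{u, v}`. It is connected (through the common neighbour `x`) and no
vertex outside `H` has two neighbours in `H`. If `H ≠ V`, removing single vertices of the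
2-connected graph shows that some path leaves `H` and comes back at a different vertex. A shortest
such path, closed up by a shortest path inside `H` between its ends, is an induced cycle of length
at least four, which a chordal graph does not have.
-/

variable {G : SimpleGraph V}

/-- `q 0, …, q m` is a walk of `G` inside `S`; the values of `q` beyond `m` play no role. -/
structure IsWalkIn (G : SimpleGraph V) (S : Set V) (q : ℕ → V) (m : ℕ) : Prop where
  mem : ∀ i ≤ m, q i ∈ S
  adj : ∀ i < m, G.Adj (q i) (q (i + 1))

def IsInducedPath (G : SimpleGraph V) (q : ℕ → V) (m : ℕ) : Prop :=
  ∀ i j, i < j → j ≤ m → q i ≠ q j ∧ (G.Adj (q i) (q j) ↔ j = i + 1)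

def IsInducedCycle (G : SimpleGraph V) (f : ℕ → V) (n : ℕ) : Prop :=
  ∀ i j, i < j → j < n → f i ≠ f j ∧ (G.Adj (f i) (f j) ↔ j = i + 1 ∨ (i = 0 ∧ j = n - 1))

namespace IsWalkIn

variable {S : Set V} {q : ℕ → V} {m : ℕ}

lemma take (hq : IsWalkIn G S q m) {l : ℕ} (hl : l ≤ m) : IsWalkIn G S q l :=
  ⟨fun i hi => hq.mem i (hi.trans hl), fun i hi => hq.adj i (hi.trans_le hl)⟩

lemma drop (hq : IsWalkIn G S q m) {l : ℕ} (hl : l ≤ m) :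
    IsWalkIn G S (fun t => q (t + l)) (m - l) :=
  ⟨fun i hi => hq.mem _ (by omega), fun i hi => by
    simpa only [Nat.add_right_comm i 1 l] using hq.adj (i + l) (by omega)⟩

lemma cons (hq : IsWalkIn G S q m) {c : V} (hc : c ∈ S) (hadj : G.Adj c (q 0)) :
    IsWalkIn G S (fun t => if t = 0 then c else q (t - 1)) (m + 1) := by
  refine ⟨fun i hi => ?_, fun i hi => ?_⟩
  · split_ifs
    · exact hc
    · exact hq.mem _ (by omega)
  · rcases i with _ | i
    · simpa using hadj
    · simpa using hq.adj i (by omega)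

lemma exists_shortcut (hq : IsWalkIn G S q m) {i d : ℕ} (hd : i + d + 1 ≤ m)
    (hadj : G.Adj (q i) (q (i + d + 1))) :
    ∃ q' : ℕ → V, q' 0 = q 0 ∧ q' (m - d) = q m ∧ IsWalkIn G S q' (m - d) := by
  refine ⟨fun t => if t ≤ i then q t else q (t + d), by simp, ?_, ?_, ?_⟩
  · simp only [if_neg (show ¬ m - d ≤ i by omega), Nat.sub_add_cancel (show d ≤ m by omega)]
  · intro t ht
    split_ifs
    · exact hq.mem t (by omega)
    · exact hq.mem _ (by omega)
  · intro t ht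
    rcases lt_trichotomy t i with h | rfl | h
    · simpa [h.le, Nat.succ_le_of_lt h] using hq.adj t (by omega)
    · simpa [Nat.add_right_comm t 1 d] using hadj
    · simpa [h.not_ge, show ¬ t + 1 ≤ i by omega, Nat.add_right_comm t 1 d] using
        hq.adj (t + d) (by omega)

theorem exists_isInducedPath (hq : IsWalkIn G S q m) :
    ∃ l ≤ m, ∃ p : ℕ → V, p 0 = q 0 ∧ p l = q m ∧ IsWalkIn G S p l ∧ IsInducedPath G p l := by
  classical
  have hex : ∃ l, ∃ p : ℕ → V, p 0 = q 0 ∧ p l = q m ∧ IsWalkIn G S p l := ⟨m, q, rfl, rfl, hq⟩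
  obtain ⟨p, hp0, hpl, hp⟩ := Nat.find_spec hex
  have hmin : ∀ {l' p'}, p' 0 = p 0 → p' l' = p (Nat.find hex) → IsWalkIn G S p' l' →
      Nat.find hex ≤ l' := fun h0 hl h => Nat.find_min' hex ⟨_, h0.trans hp0, hl.trans hpl, h⟩
  refine ⟨_, Nat.find_min' hex ⟨q, rfl, rfl, hq⟩, p, hp0, hpl, hp, fun i j hij hjl => ⟨?_, ?_⟩⟩
  · intro heq
    rcases hjl.lt_or_eq with hjl | rfl
    · obtain ⟨p', h0, hl, hp'⟩ := hp.exists_shortcut (i := i) (d := j - i) (by omega)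
        (by rw [heq, show i + (j - i) + 1 = j + 1 by omega]; exact hp.adj j hjl)
      have := hmin h0 hl hp'
      omega
    · have := hmin rfl heq (hp.take hij.le)
      omega
  · refine ⟨fun hadj => ?_, fun h => h ▸ hp.adj i (by omega)⟩
    by_contra hne
    obtain ⟨p', h0, hl, hp'⟩ := hp.exists_shortcut (i := i) (d := j - i - 1) (by omega)
      (by rwa [show i + (j - i - 1) + 1 = j by omega])
    have := hmin h0 hl hp'
    omega

end IsWalkIn

lemma IsInducedPath.injOn {q : ℕ → V} {m i j : ℕ} (hq : IsInducedPath G q m) (hi : i ≤ m)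
    (hj : j ≤ m) (h : q i = q j) : i = j := by
  by_contra hne
  rcases Nat.lt_or_gt_of_ne hne with hij | hji
  · exact (hq i j hij hj).1 h
  · exact (hq j i hji hi).1 h.symm

theorem IsInducedPath.isInducedCycle_append {q w : ℕ → V} {m k : ℕ} (hq : IsInducedPath G q m)
    (hw : IsInducedPath G w k)
    (hqw : ∀ i ≤ m, ∀ j ≤ k,
      q i ≠ w j ∧ (G.Adj (q i) (w j) ↔ (i = m ∧ j = 0) ∨ (i = 0 ∧ j = k))) :
    IsInducedCycle G (fun t => if t ≤ m then q t else w (t - (m + 1))) (m + k + 2) := by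
  intro i j hij hjn
  by_cases hjm : j ≤ m
  · simp only [if_pos hjm, if_pos (hij.le.trans hjm)]
    refine ⟨(hq i j hij hjm).1, ?_⟩
    rw [(hq i j hij hjm).2]
    omega
  by_cases him : i ≤ m
  · simp only [if_pos him, if_neg hjm]
    refine ⟨(hqw i him _ (by omega)).1, ?_⟩
    rw [(hqw i him _ (by omega)).2]
    omega
  · simp only [if_neg him, if_neg hjm]
    have := hw (i - (m + 1)) (j - (m + 1)) (by omega) (by omega)
    refine ⟨this.1, ?_⟩
    rw [this.2]
    omega

theorem IsChordal.not_isInducedCycle (hG : IsChordal G) {f : ℕ → V} {n : ℕ} (hn : 4 ≤ n) :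
    ¬ IsInducedCycle G f n := by
  intro hf
  have hcycle : ∀ i j : Fin n, i < j →
      f i ≠ f j ∧ (G.Adj (f i) (f j) ↔ (cycleGraph n).Adj i j) := by
    intro i j hij
    refine ⟨(hf i j hij j.2).1, ?_⟩
    rw [(hf i j hij j.2).2, cycleGraph_adj', Fin.coe_sub_iff_le.2 hij.le,
      Fin.coe_sub_iff_lt.2 hij]
    have : (i : ℕ) < j := hij
    omega
  refine (hG n hn).false ⟨⟨fun i => f i, fun i j h => ?_⟩, fun {i j} => ?_⟩
  · by_contra hne
    rcases lt_or_gt_of_ne hne with hij | hji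
    · exact (hcycle i j hij).1 h
    · exact (hcycle j i hji).1 h.symm
  · rcases lt_trichotomy i j with hij | rfl | hji
    · exact (hcycle i j hij).2
    · simp
    · rw [G.adj_comm, (cycleGraph n).adj_comm]
      exact (hcycle j i hji).2

lemma SimpleGraph.Reachable.exists_isWalkIn {S : Set V} {a b : V} {ha : a ∈ S} {hb : b ∈ S}
    (h : (G.induce S).Reachable ⟨a, ha⟩ ⟨b, hb⟩) :
    ∃ m q, q 0 = a ∧ q m = b ∧ IsWalkIn G S q m := by
  obtain ⟨W⟩ := h
  exact ⟨W.length, fun i => W.getVert i, by simp, by simp, fun i _ => (W.getVert i).2,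
    fun i hi => W.adj_getVert_succ hi⟩

lemma SimpleGraph.Walk.exists_isWalkIn_adj_notMem {S : Set V} {c y : V} (W : G.Walk c y)
    (hc : c ∈ S) (hy : y ∉ S) :
    ∃ k w b, w 0 = c ∧ IsWalkIn G S w k ∧ b ∉ S ∧ b ∈ W.support ∧ G.Adj (w k) b := by
  induction W with
  | nil => exact absurd hc hy
  | @cons c d y hcd W ih =>
    by_cases hd : d ∈ S
    · obtain ⟨k, w, b, hw0, hw, hb, hbW, hwb⟩ := ih hd hy
      exact ⟨k + 1, _, b, rfl, hw.cons hc (hw0 ▸ hcd), hb, by simp [hbW], by simpa using hwb⟩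
    · exact ⟨0, fun _ => c, d, rfl, ⟨fun _ _ => hc, fun _ hi => absurd hi (Nat.not_lt_zero _)⟩,
        hd, by simp, hcd⟩

/-- An `H`-path in the sense of Diestel with at least one inner vertex: `a, w 0, …, w k, b`. -/
structure IsHPath (G : SimpleGraph V) (H : Set V) (a b : V) (w : ℕ → V) (k : ℕ) : Prop where
  left_mem : a ∈ H
  right_mem : b ∈ H
  ne : a ≠ b
  walk : IsWalkIn G Hᶜ w k
  adj_left : G.Adj a (w 0)
  adj_right : G.Adj (w k) b

section HPath

variable {H : Set V} {a b : V} {w : ℕ → V} {k : ℕ}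

lemma exists_isWalkIn_compl_adj_ne (hcut : ∀ z, (G.induce {z}ᶜ).Connected) {c z : V}
    (hc : c ∉ H) (hb : b ∈ H) (hz : z ∈ H) (hbz : b ≠ z) :
    ∃ k w b', w 0 = c ∧ IsWalkIn G Hᶜ w k ∧ b' ∈ H ∧ b' ≠ z ∧ G.Adj (w k) b' := by
  obtain ⟨W⟩ := (hcut z).preconnected ⟨c, fun h => hc (h ▸ hz)⟩ ⟨b, hbz⟩
  obtain ⟨k, w, b', hw0, hw, hb', hb'W, hwb'⟩ :=
    (W.map (Embedding.induce _).toHom).exists_isWalkIn_adj_notMem (S := Hᶜ) hc (by simpa using hb)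
  rw [Walk.support_map] at hb'W
  obtain ⟨z', -, rfl⟩ := List.mem_map.1 hb'W
  exact ⟨k, w, _, hw0, hw, by simpa using hb', z'.2, hwb'⟩

theorem exists_isHPath_of_forall_connected_induce (hcut : ∀ z, (G.induce {z}ᶜ).Connected)
    {c : V} (ha : a ∈ H) (hb : b ∈ H) (hab : a ≠ b) (hc : c ∉ H) :
    ∃ a' b' w k, IsHPath G H a' b' w k := by
  obtain ⟨k₁, w₁, b₁, -, hw₁, hb₁, hb₁a, hwb₁⟩ :=
    exists_isWalkIn_compl_adj_ne hcut hc hb ha hab.symm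
  obtain ⟨k₂, w₂, b₂, hw₂0, hw₂, hb₂, hb₂b₁, hwb₂⟩ :=
    exists_isWalkIn_compl_adj_ne hcut (hw₁.mem k₁ le_rfl) ha hb₁ hb₁a.symm
  exact ⟨b₁, b₂, w₂, k₂, hb₁, hb₂, hb₂b₁.symm, hw₂, hw₂0 ▸ hwb₁.symm, hwb₂⟩

lemma IsHPath.length_pos (hH : pInterval G H ⊆ H) (hw : IsHPath G H a b w k) : 0 < k := by
  refine Nat.pos_of_ne_zero fun hk => hw.walk.mem 0 (Nat.zero_le k) (hH (Or.inr ?_))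
  exact ⟨a, b, hw.ne, hw.left_mem, hw.right_mem, hw.adj_left, (hk ▸ hw.adj_right).symm⟩

lemma IsHPath.exists_isInducedPath_minimal (hw : IsHPath G H a b w k) :
    ∃ a b w k, IsHPath G H a b w k ∧ IsInducedPath G w k ∧
      ∀ a' b' w' k', IsHPath G H a' b' w' k' → k ≤ k' := by
  classical
  have hex : ∃ k, ∃ a b w, IsHPath G H a b w k := ⟨k, a, b, w, hw⟩
  obtain ⟨a, b, w, hw⟩ := Nat.find_spec hex
  obtain ⟨l, hl, p, hp0, hpl, hp, hind⟩ := hw.walk.exists_isInducedPath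
  exact ⟨a, b, p, l, ⟨hw.left_mem, hw.right_mem, hw.ne, hp, hp0 ▸ hw.adj_left,
    hpl ▸ hw.adj_right⟩, hind, fun a' b' w' k' h' => hl.trans (Nat.find_min' hex ⟨a', b', w', h'⟩)⟩

/-- Any other edge from a shortest `H`-path into `H` would give a shorter `H`-path, or a vertex
outside `H` with two neighbours in `H`. -/
lemma IsHPath.adj_iff_of_minimal (hH : pInterval G H ⊆ H) (hw : IsHPath G H a b w k)
    (hmin : ∀ a' b' w' k', IsHPath G H a' b' w' k' → k ≤ k') {i : ℕ} (hi : i ≤ k) {h : V}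
    (hh : h ∈ H) : G.Adj (w i) h ↔ (i = 0 ∧ h = a) ∨ (i = k ∧ h = b) := by
  refine ⟨fun hadj => ?_, ?_⟩
  · by_cases hha : h = a
    · refine Or.inl ⟨Nat.eq_zero_of_not_pos fun hi0 => ?_, hha⟩
      have := hmin _ _ _ _ ⟨hw.left_mem, hw.right_mem, hw.ne, hw.walk.drop hi,
        by simpa [hha] using hadj.symm, by simpa [Nat.sub_add_cancel hi] using hw.adj_right⟩
      omega
    · have hik : i = k := le_antisymm hi
        (hmin _ _ _ _ ⟨hw.left_mem, hh, Ne.symm hha, hw.walk.take hi, hw.adj_left, hadj⟩)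
      subst hik
      refine Or.inr ⟨rfl, by_contra fun hhb => hw.walk.mem i le_rfl (hH (Or.inr ?_))⟩
      exact ⟨h, b, hhb, hh, hw.right_mem, hadj.symm, hw.adj_right.symm⟩
  · rintro (⟨rfl, rfl⟩ | ⟨rfl, rfl⟩)
    · exact hw.adj_left.symm
    · exact hw.adj_right

theorem IsChordal.not_isHPath (hG : IsChordal G) (hconn : (G.induce H).Preconnected)
    (hH : pInterval G H ⊆ H) : ¬ IsHPath G H a b w k := by
  intro h
  obtain ⟨a, b, w, k, hw, hwind, hmin⟩ := h.exists_isInducedPath_minimal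
  obtain ⟨m₀, r, hr0, hrm, hr⟩ :=
    SimpleGraph.Reachable.exists_isWalkIn (hconn ⟨b, hw.right_mem⟩ ⟨a, hw.left_mem⟩)
  obtain ⟨m, -, q, hq0, hqm, hq, hqind⟩ := hr.exists_isInducedPath
  rw [hr0] at hq0
  rw [hrm] at hqm
  have hm : 0 < m := Nat.pos_of_ne_zero fun hm => hw.ne (by rw [← hqm, ← hq0, hm])
  have hk := hw.length_pos hH
  refine hG.not_isInducedCycle (by omega : 4 ≤ m + k + 2)
    (hqind.isInducedCycle_append hwind fun i hi j hj => ⟨?_, ?_⟩)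
  · exact fun heq => hw.walk.mem j hj (heq ▸ hq.mem i hi)
  · have hqa : q i = a ↔ i = m := by
      rw [← hqm]
      exact ⟨fun h => hqind.injOn hi le_rfl h, fun h => h ▸ rfl⟩
    have hqb : q i = b ↔ i = 0 := by
      rw [← hq0]
      exact ⟨fun h => hqind.injOn hi (Nat.zero_le m) h, fun h => h ▸ rfl⟩
    rw [G.adj_comm, hw.adj_iff_of_minimal hH hmin hj (hq.mem i hi), hqa, hqb]
    tauto

end HPath

lemma pInterval_mono {S T : Set V} (h : S ⊆ T) : pInterval G S ⊆ pInterval G T :=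
  Set.union_subset_union h fun _ ⟨p, r, hpr, hp, hr, hpc, hrc⟩ => ⟨p, r, hpr, h hp, h hr, hpc, hrc⟩

lemma monotone_pIter (G : SimpleGraph V) (S : Set V) : Monotone (pIter G S) :=
  monotone_nat_of_le_succ fun _ => Set.subset_union_left

lemma pIter_subset {S H : Set V} (hS : S ⊆ H) (hH : pInterval G H ⊆ H) : ∀ k, pIter G S k ⊆ H
  | 0 => hS
  | k + 1 => (pInterval_mono (pIter_subset hS hH k)).trans hH

lemma exists_pInterval_pIter_eq [Finite V] (G : SimpleGraph V) (S : Set V) :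
    ∃ N, pInterval G (pIter G S N) = pIter G S N := by
  obtain ⟨N, hN⟩ := WellFoundedGT.monotone_chain_condition ⟨pIter G S, monotone_pIter G S⟩
  exact ⟨N, (hN (N + 1) N.le_succ).symm⟩

lemma reachable_induce_of_mem_pIter {H : Set V} {u v x : V} (hH : pInterval G H ⊆ H)
    (hu : u ∈ H) (hv : v ∈ H) (huv : u ≠ v) (hux : G.Adj u x) (hvx : G.Adj v x) (k : ℕ) :
    ∀ a (ha : a ∈ H), a ∈ pIter G {u, v} k → (G.induce H).Reachable ⟨a, ha⟩ ⟨u, hu⟩ := by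
  induction k with
  | zero =>
    rintro a ha (rfl | rfl)
    · rfl
    · have hx : x ∈ H := hH (Or.inr ⟨u, a, huv, hu, hv, hux, hvx⟩)
      exact (show (G.induce H).Adj ⟨a, ha⟩ ⟨x, hx⟩ from hvx).reachable.trans
        (show (G.induce H).Adj ⟨x, hx⟩ ⟨u, hu⟩ from hux.symm).reachable
  | succ k ih =>
    rintro a ha (ha' | ⟨p, -, -, hp, -, hpa, -⟩)
    · exact ih a ha ha'
    · have hpH : p ∈ H :=
        pIter_subset (Set.insert_subset hu (Set.singleton_subset_iff.2 hv)) hH k hp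
      exact (show (G.induce H).Adj ⟨a, ha⟩ ⟨p, hpH⟩ from hpa.symm).reachable.trans (ih p hpH hp)

/-- In a 2-connected chordal graph, two vertices with a common neighbor form a hull set. -/
theorem pair_with_common_neighbor_is_hull_set {V : Type*} [Fintype V]
    (G : SimpleGraph V) (h2 : TwoConnected G) (hch : IsChordal G)
    (u v : V) (huv : u ≠ v) (x : V) (hux : G.Adj u x) (hvx : G.Adj v x) :
    Percolates G {u, v} := by
  obtain ⟨N, hN⟩ := exists_pInterval_pIter_eq G {u, v}
  set H := pIter G {u, v} N
  have hclosed : pInterval G H ⊆ H := hN.subset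
  have hu : u ∈ H := monotone_pIter G {u, v} N.zero_le (Set.mem_insert u {v})
  have hv : v ∈ H := monotone_pIter G {u, v} N.zero_le (Set.mem_insert_of_mem u rfl)
  have hreach := reachable_induce_of_mem_pIter hclosed hu hv huv hux hvx N
  have hconn : (G.induce H).Preconnected := fun a b =>
    (hreach a a.2 a.2).trans (hreach b b.2 b.2).symm
  refine ⟨N, Set.eq_univ_of_forall fun c => by_contra fun hc => ?_⟩
  obtain ⟨a, b, w, k, hw⟩ := exists_isHPath_of_forall_connected_induce h2.2.2 hu hv huv hc
  exact hch.not_isHPath hconn hclosed hw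
end

section
/- Let G be a unit interval graph with unit interval order <, and let H ⊆ V(G) with I⁰[H] = H and I^{k+1}[H] = I^k[H] ∪ {v : v has at least two neighbors in I^k[H]}. If I^k[H] is an interval of consecutive vertices in the order, then I^{k+1}[H] is also an interval. -/
open SimpleGraph

variable {V : Type*}

lemma pInterval_left_aux {V : Type*} [LinearOrder V] (G : SimpleGraph V)
    (hG : IsUnitIntervalOrder G) (S : Set V) (hS : S.OrdConnected) {x y : V}
    (hx : x ∈ pInterval G S) (hxy : x ≤ y) :
    y ∈ pInterval G S ∨ ∃ s ∈ S, s ≤ y := by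
  by_cases hxS : x ∈ S
  · exact Or.inr ⟨x, hxS, hxy⟩
  rcases hx with hx | ⟨u, w, huw, hu, hw, hux, hwx⟩
  · exact absurd hx hxS
  set a := min u w with ha
  set b := max u w with hb
  have hab : a < b := min_lt_max.2 huw
  have haS : a ∈ S := by rcases min_choice u w with h' | h' <;> rw [ha, h'] <;> assumption
  have hbS : b ∈ S := by rcases max_choice u w with h' | h' <;> rw [hb, h'] <;> assumption
  have hax : G.Adj a x := by rcases min_choice u w with h' | h' <;> rw [ha, h'] <;> assumption
  have hbx : G.Adj b x := by rcases max_choice u w with h' | h' <;> rw [hb, h'] <;> assumption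
  have hxab : x < a ∨ b < x := by
    by_contra hcon
    push_neg at hcon
    exact hxS (hS.out haS hbS ⟨hcon.1, hcon.2⟩)
  rcases hxab with hxa | hbx'
  · by_cases hay : a ≤ y
    · exact Or.inr ⟨a, haS, hay⟩
    · push_neg at hay
      have h1 : y = a ∨ G.Adj a y :=
        hG a x y a (Or.inr hax) (Or.inl rfl) hxy hay.le
      have h2 : y = b ∨ G.Adj b y :=
        hG b x y b (Or.inr hbx) (Or.inl rfl) hxy (hay.le.trans hab.le)
      have h1' : G.Adj a y := h1.resolve_left (fun he => absurd he.symm hay.ne')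
      have h2' : G.Adj b y := h2.resolve_left (fun he => absurd he.symm (hay.trans hab).ne')
      exact Or.inl (Or.inr ⟨a, b, hab.ne, haS, hbS, h1', h2'⟩)
  · exact Or.inr ⟨b, hbS, hbx'.le.trans hxy⟩

lemma pInterval_right_aux {V : Type*} [LinearOrder V] (G : SimpleGraph V)
    (hG : IsUnitIntervalOrder G) (S : Set V) (hS : S.OrdConnected) {y z : V}
    (hz : z ∈ pInterval G S) (hyz : y ≤ z) :
    y ∈ pInterval G S ∨ ∃ s ∈ S, y ≤ s := by
  by_cases hzS : z ∈ S
  · exact Or.inr ⟨z, hzS, hyz⟩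
  rcases hz with hz | ⟨u, w, huw, hu, hw, huz, hwz⟩
  · exact absurd hz hzS
  set a := min u w with ha
  set b := max u w with hb
  have hab : a < b := min_lt_max.2 huw
  have haS : a ∈ S := by rcases min_choice u w with h' | h' <;> rw [ha, h'] <;> assumption
  have hbS : b ∈ S := by rcases max_choice u w with h' | h' <;> rw [hb, h'] <;> assumption
  have haz : G.Adj a z := by rcases min_choice u w with h' | h' <;> rw [ha, h'] <;> assumption
  have hbz : G.Adj b z := by rcases max_choice u w with h' | h' <;> rw [hb, h'] <;> assumption
  have hzab : z < a ∨ b < z := by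
    by_contra hcon
    push_neg at hcon
    exact hzS (hS.out haS hbS ⟨hcon.1, hcon.2⟩)
  rcases hzab with hza | hbz'
  · exact Or.inr ⟨a, haS, hyz.trans hza.le⟩
  · by_cases hyb : y ≤ b
    · exact Or.inr ⟨b, hbS, hyb⟩
    · push_neg at hyb
      have h1 : y = b ∨ G.Adj b y :=
        hG b b y z (Or.inl rfl) (Or.inr hbz) hyb.le hyz
      have h2 : y = a ∨ G.Adj a y :=
        hG a a y z (Or.inl rfl) (Or.inr haz) (hab.le.trans hyb.le) hyz
      have h1' : G.Adj b y := h1.resolve_left (fun he => absurd he hyb.ne')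
      have h2' : G.Adj a y := h2.resolve_left (fun he => absurd he (hab.trans hyb).ne')
      exact Or.inl (Or.inr ⟨a, b, hab.ne, haS, hbS, h2', h1'⟩)

/-- If `I^k[H]` is an interval of consecutive vertices in a unit interval order, then so
is `I^{k+1}[H]`. -/
theorem pIter_succ_ordConnected {V : Type*} [LinearOrder V] (G : SimpleGraph V)
    (hG : IsUnitIntervalOrder G) (H : Set V) (k : ℕ)
    (h : (pIter G H k).OrdConnected) : (pIter G H (k + 1)).OrdConnected := by
  set S := pIter G H k with hS
  show (pInterval G S).OrdConnected
  constructor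
  intro x hx z hz y hy
  rcases pInterval_left_aux G hG S h hx hy.1 with hyP | ⟨s1, hs1, hs1y⟩
  · exact hyP
  rcases pInterval_right_aux G hG S h hz hy.2 with hyP | ⟨s2, hs2, hys2⟩
  · exact hyP
  exact Or.inl (h.out hs1 hs2 ⟨hs1y, hys2⟩)
end

section
/- Let G be a unit interval graph with at least 3 vertices such that every two maximal cliques with nonempty intersection share at least two vertices. Then the percolation times of the hull sets {v_L, v_L↑} and {v_R↓, v_R} both equal diam(G), which equals τ(G), the maximum percolation time over all hull sets. -/
open SimpleGraph

variable {V : Type*}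

/-- `s` is a maximal clique of `G`. -/
def IsMaxClique (G : SimpleGraph V) (s : Set V) : Prop :=
  G.IsClique s ∧ ∀ t : Set V, G.IsClique t → s ⊆ t → s = t



set_option linter.unusedSectionVars false
set_option maxHeartbeats 1000000

open scoped Classical

section Helpers
variable [Fintype V] [LinearOrder V] (G : SimpleGraph V)

lemma adjL (hG : IsUnitIntervalOrder G) {a b x : V} (hab : G.Adj a b) (h1 : a < x)
    (h2 : x ≤ b) : G.Adj a x := by
  rcases hG a a x b (Or.inl rfl) (Or.inr hab) (le_of_lt h1) h2 with h | h
  · exact absurd h.symm (ne_of_lt h1)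
  · exact h

lemma adjR (hG : IsUnitIntervalOrder G) {a b x : V} (hab : G.Adj a b) (h1 : a ≤ x)
    (h2 : x < b) : G.Adj x b := by
  rcases hG b a x b (Or.inr hab.symm) (Or.inl rfl) h1 (le_of_lt h2) with h | h
  · exact absurd h (ne_of_lt h2)
  · exact h.symm

noncomputable def mxN (y : V) : V :=
  (Finset.univ.filter fun z : V => z = y ∨ G.Adj y z).max' ⟨y, by simp⟩

lemma le_mxN {y z : V} (h : z = y ∨ G.Adj y z) : z ≤ mxN G y := by
  apply Finset.le_max'
  simp only [Finset.mem_filter, Finset.mem_univ, true_and]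
  exact h

lemma self_le_mxN (y : V) : y ≤ mxN G y := le_mxN G (Or.inl rfl)

lemma mxN_spec (y : V) : mxN G y = y ∨ G.Adj y (mxN G y) := by
  have := Finset.max'_mem (Finset.univ.filter fun z : V => z = y ∨ G.Adj y z)
    ⟨y, by simp⟩
  simp only [Finset.mem_filter, Finset.mem_univ, true_and] at this
  exact this

lemma adj_mxN {y : V} (h : y < mxN G y) : G.Adj y (mxN G y) :=
  (mxN_spec G y).resolve_left (ne_of_gt h)

lemma mxN_mono (hG : IsUnitIntervalOrder G) {y y' : V} (h : y ≤ y') :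
    mxN G y ≤ mxN G y' := by
  rcases mxN_spec G y with hs | hs
  · rw [hs]; exact h.trans (self_le_mxN G y')
  rcases le_or_gt (mxN G y) y' with h2 | h2
  · exact h2.trans (self_le_mxN G y')
  · exact le_mxN G (Or.inr (adjR G hG hs h h2))

lemma iter_le_iter_succ (hG : IsUnitIntervalOrder G) (y : V) (k : ℕ) :
    (mxN G)^[k] y ≤ (mxN G)^[k + 1] y := by
  rw [Function.iterate_succ_apply']
  exact self_le_mxN G _

lemma self_le_iter (y : V) (k : ℕ) : y ≤ (mxN G)^[k] y := by
  induction k with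
  | zero => simp
  | succ k ih =>
    rw [Function.iterate_succ_apply']
    exact ih.trans (self_le_mxN G _)

lemma iter_mono_k (hG : IsUnitIntervalOrder G) (y : V) {k k' : ℕ} (h : k ≤ k') :
    (mxN G)^[k] y ≤ (mxN G)^[k'] y := by
  induction h with
  | refl => exact le_rfl
  | step _ ih => exact ih.trans (by rw [Function.iterate_succ_apply']; exact self_le_mxN G _)

lemma iter_mono_arg (hG : IsUnitIntervalOrder G) {y y' : V} (h : y ≤ y') (k : ℕ) :
    (mxN G)^[k] y ≤ (mxN G)^[k] y' := by
  induction k with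
  | zero => simpa
  | succ k ih =>
    rw [Function.iterate_succ_apply', Function.iterate_succ_apply']
    exact mxN_mono G hG ih

end Helpers

section Helpers2
variable [Fintype V] [LinearOrder V] (G : SimpleGraph V)

lemma exists_cross {y : V} : ∀ {a b : V}, G.Walk a b → a ≤ y → ¬ b ≤ y →
    ∃ c d, c ≤ y ∧ ¬ d ≤ y ∧ G.Adj c d := by
  intro a b p
  induction p with
  | nil => intro h1 h2; exact absurd h1 h2
  | cons h p ih =>
    intro h1 h2
    rename_i a c b
    by_cases hc : c ≤ y
    · exact ih hc h2
    · exact ⟨a, c, h1, hc, h⟩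

lemma adj_mxN_of_lt (hG : IsUnitIntervalOrder G) (hconn : G.Connected) {vR : V}
    (hR : ∀ x, x ≤ vR) {y : V} (hy : y < vR) :
    y < mxN G y ∧ G.Adj y (mxN G y) := by
  obtain ⟨c, d, hc, hd, hcd⟩ :=
    exists_cross G ((hconn y vR).some) (le_refl y) (not_le_of_gt hy)
  push_neg at hd
  have hyd : G.Adj y d := adjR G hG hcd hc hd
  have h2 : y < mxN G y := lt_of_lt_of_le hd (le_mxN G (Or.inr hyd))
  exact ⟨h2, adj_mxN G h2⟩

end Helpers2

section Helpers3
variable [Fintype V] [LinearOrder V] (G : SimpleGraph V)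

lemma le_iter_of_walk (hG : IsUnitIntervalOrder G) :
    ∀ {u x : V} (p : G.Walk u x), x ≤ (mxN G)^[p.length] u := by
  intro u x p
  induction p with
  | nil => simp
  | cons h p ih =>
    rename_i a c b
    calc b ≤ (mxN G)^[p.length] c := ih
    _ ≤ (mxN G)^[p.length] (mxN G a) := iter_mono_arg G hG (le_mxN G (Or.inr h)) _
    _ = (mxN G)^[p.length + 1] a := (Function.iterate_succ_apply (mxN G) p.length a).symm

lemma le_iter_of_dist (hG : IsUnitIntervalOrder G) (hconn : G.Connected) {u x : V} {k : ℕ}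
    (h : G.dist u x ≤ k) : x ≤ (mxN G)^[k] u := by
  obtain ⟨p, hp⟩ := (hconn u x).exists_walk_length_eq_dist
  calc x ≤ (mxN G)^[p.length] u := le_iter_of_walk G hG p
  _ ≤ (mxN G)^[k] u := iter_mono_k G hG u (by rw [hp]; exact h)

lemma dist_le_of_le_iter (hG : IsUnitIntervalOrder G) (hconn : G.Connected) {u x : V} {k : ℕ}
    (hux : u ≤ x) (h : x ≤ (mxN G)^[k] u) : G.dist u x ≤ k := by
  induction k generalizing x with
  | zero =>
    simp only [Function.iterate_zero, id] at h
    have : x = u := le_antisymm h hux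
    rw [this, SimpleGraph.dist_self]
  | succ k ih =>
    rcases le_or_gt x ((mxN G)^[k] u) with h2 | h2
    · exact (ih hux h2).trans (Nat.le_succ k)
    · have hM : G.Adj ((mxN G)^[k] u) x := by
        rw [Function.iterate_succ_apply'] at h
        have hadj : G.Adj ((mxN G)^[k] u) (mxN G ((mxN G)^[k] u)) :=
          adj_mxN G (lt_of_lt_of_le h2 h)
        rcases eq_or_lt_of_le h with rfl | hlt
        · exact hadj
        · exact adjL G hG hadj h2 h
      have hdM : G.dist u ((mxN G)^[k] u) ≤ k := ih (self_le_iter G u k) le_rfl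
      calc G.dist u x ≤ G.dist u ((mxN G)^[k] u) + G.dist ((mxN G)^[k] u) x :=
            hconn.dist_triangle
      _ ≤ k + 1 := by
          have : G.dist ((mxN G)^[k] u) x ≤ 1 :=
            SimpleGraph.dist_le (SimpleGraph.Walk.cons hM SimpleGraph.Walk.nil)
          omega

end Helpers3

section Helpers4
variable [Fintype V] [LinearOrder V] (G : SimpleGraph V)

/-- The closed-neighborhood-below interval `[A N, N]` of a vertex `N` that is the max
neighbor of some witness `y`, is a maximal clique. -/
lemma isMaxClique_below (hG : IsUnitIntervalOrder G) {y N : V} (hyN : G.Adj y N)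
    (hmax : mxN G y = N) :
    IsMaxClique G {x | (x = N ∨ G.Adj N x) ∧ x ≤ N} := by
  have hyleN : y ≤ N := hmax ▸ self_le_mxN G y
  constructor
  · intro a ha b hb hne
    rcases ha.1 with rfl | ha1
    · exact (hb.1.resolve_left (Ne.symm hne))
    rcases hb.1 with rfl | hb1
    · exact ha1.symm
    rcases lt_or_gt_of_ne hne with hab | hab
    · exact adjL G hG ha1.symm hab hb.2
    · exact (adjL G hG hb1.symm hab ha.2).symm
  · intro t ht hsub
    apply le_antisymm hsub
    intro s hs
    have hN : N ∈ t := hsub ⟨Or.inl rfl, le_rfl⟩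
    have hy : y ∈ t := hsub ⟨Or.inr hyN.symm, hyleN⟩
    rcases le_or_gt s N with hsN | hsN
    · rcases eq_or_ne s N with rfl | hne
      · exact ⟨Or.inl rfl, le_rfl⟩
      · exact ⟨Or.inr (ht hN hs (Ne.symm hne)), hsN⟩
    · exfalso
      have hys : G.Adj y s := ht hy hs (by rintro rfl; exact absurd hsN (not_lt_of_ge hyleN))
      have := le_mxN G (Or.inr hys)
      rw [hmax] at this
      exact absurd this (not_le_of_gt hsN)

/-- Key lemma from the clique-intersection hypothesis: if `N = mxN y < vR`, there is a
vertex strictly below `N` reaching (via `mxN`) at least as far as `N` does. -/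
lemma key_step (hG : IsUnitIntervalOrder G) (hconn : G.Connected)
    (hclq : ∀ s t : Set V, IsMaxClique G s → IsMaxClique G t → (s ∩ t).Nonempty →
      2 ≤ (s ∩ t).ncard)
    {vR : V} (hR : ∀ x, x ≤ vR) {y : V} (h1 : y < vR) (h2 : mxN G y < vR) :
    ∃ z, z < mxN G y ∧ mxN G (mxN G y) ≤ mxN G z := by
  set N := mxN G y with hN
  set N' := mxN G N with hN'
  have hyN : G.Adj y N := (adj_mxN_of_lt G hG hconn hR h1).2
  have hNN' : G.Adj N N' := (adj_mxN_of_lt G hG hconn hR h2).2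
  have hNltN' : N < N' := (adj_mxN_of_lt G hG hconn hR h2).1
  have hC1 : IsMaxClique G {x | (x = N ∨ G.Adj N x) ∧ x ≤ N} :=
    isMaxClique_below G hG hyN rfl
  have hC2 : IsMaxClique G {x | (x = N' ∨ G.Adj N' x) ∧ x ≤ N'} :=
    isMaxClique_below G hG hNN' rfl
  have hNmem : N ∈ {x | (x = N ∨ G.Adj N x) ∧ x ≤ N} ∩ {x | (x = N' ∨ G.Adj N' x) ∧ x ≤ N'} :=
    ⟨⟨Or.inl rfl, le_rfl⟩, ⟨Or.inr hNN'.symm, hNltN'.le⟩⟩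
  have hcard2 := hclq _ _ hC1 hC2 ⟨N, hNmem⟩
  have h1lt : 1 < ({x | (x = N ∨ G.Adj N x) ∧ x ≤ N} ∩
      {x | (x = N' ∨ G.Adj N' x) ∧ x ≤ N'}).ncard := by omega
  obtain ⟨z, hz, hzne⟩ := Set.exists_ne_of_one_lt_ncard h1lt N
  refine ⟨z, lt_of_le_of_ne hz.1.2 hzne, ?_⟩
  have hzN' : G.Adj N' z := by
    rcases hz.2.1 with rfl | h
    · exact absurd (le_antisymm hz.1.2 hNltN'.le) hzne
    · exact h
  exact le_mxN G (Or.inr hzN'.symm)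

end Helpers4

section Helpers5
variable [Fintype V] [LinearOrder V] (G : SimpleGraph V)

lemma subset_pIter_succ (S : Set V) (k : ℕ) : pIter G S k ⊆ pIter G S (k + 1) :=
  Set.subset_union_left

lemma pIter_mono_time (S : Set V) {k k' : ℕ} (h : k ≤ k') : pIter G S k ⊆ pIter G S k' := by
  induction h with
  | refl => exact le_rfl
  | step _ ih => exact ih.trans (subset_pIter_succ G S _)

lemma mem_pIter_two (S : Set V) {k : ℕ} {u w x : V} (hu : u ∈ pIter G S k)
    (hw : w ∈ pIter G S k) (hne : u ≠ w) (hadju : G.Adj u x) (hadjw : G.Adj w x) :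
    x ∈ pIter G S (k + 1) :=
  Or.inr ⟨u, w, hne, hu, hw, hadju, hadjw⟩

/-- Sweep lemma: an adjacent infected pair `u < v` sweeps upward at full `mxN` speed. -/
lemma sweep_iter (hG : IsUnitIntervalOrder G) (hconn : G.Connected)
    (hclq : ∀ s t : Set V, IsMaxClique G s → IsMaxClique G t → (s ∩ t).Nonempty →
      2 ≤ (s ∩ t).ncard)
    {vR : V} (hR : ∀ x, x ≤ vR) {S : Set V} {t : ℕ} {u v : V}
    (hadj : G.Adj u v) (huv : u < v) (hu : u ∈ pIter G S t) (hv : v ∈ pIter G S t) :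
    ∀ (k : ℕ) (x : V), u ≤ x → x ≤ (mxN G)^[k] u → x ∈ pIter G S (t + k) := by
  intro k
  induction k with
  | zero =>
    intro x h1 h2
    simp only [Function.iterate_zero, id] at h2
    have : x = u := le_antisymm h2 h1
    rw [this]; exact hu
  | succ k ih =>
    intro x h1 h2
    rcases le_or_gt x ((mxN G)^[k] u) with hx | hx
    · exact pIter_mono_time G S (Nat.le_succ _) (ih x h1 hx)
    -- x is strictly above the k-th front M
    rw [Function.iterate_succ_apply'] at h2
    have hMx : G.Adj ((mxN G)^[k] u) x := by
      have hadjM : G.Adj ((mxN G)^[k] u) (mxN G ((mxN G)^[k] u)) :=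
        adj_mxN G (lt_of_lt_of_le hx h2)
      rcases eq_or_lt_of_le h2 with rfl | hlt
      · exact hadjM
      · exact adjL G hG hadjM hx h2
    have hMmem : (mxN G)^[k] u ∈ pIter G S (t + k) := ih _ (self_le_iter G u k) le_rfl
    rcases Nat.eq_zero_or_pos k with rfl | hk
    · -- k = 0 : M = u; second neighbor is v
      simp only [Function.iterate_zero, id] at hMx hMmem hx h2 ⊢
      rcases eq_or_ne x v with rfl | hxv
      · exact pIter_mono_time G S (Nat.le_succ _) hv
      have hvx : G.Adj v x := by
        rcases lt_or_gt_of_ne hxv with hlt | hlt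
        · exact (adjR G hG hadj h1 hlt).symm
        · exact adjR G hG hMx huv.le hlt
      exact mem_pIter_two G S hu hv huv.ne hMx hvx
    · -- k ≥ 1 : M is an mxN-image; use the key lemma
      obtain ⟨j, rfl⟩ : ∃ j, k = j + 1 := ⟨k - 1, by omega⟩
      set M := (mxN G)^[j + 1] u with hM
      have hMeq : M = mxN G ((mxN G)^[j] u) := by
        rw [hM, Function.iterate_succ_apply']
      have hyR : (mxN G)^[j] u < vR := lt_of_le_of_lt (hMeq ▸ self_le_mxN G _ :
        (mxN G)^[j] u ≤ M) (lt_of_lt_of_le hx (hR x))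
      have hMR : mxN G ((mxN G)^[j] u) < vR := hMeq ▸ (lt_of_lt_of_le hx (hR x) : M < vR)
      obtain ⟨z, hzM, hzreach⟩ := key_step G hG hconn hclq hR hyR hMR
      rw [← hMeq] at hzM hzreach
      have hzx : G.Adj z x := by
        have h3 : x ≤ mxN G z := le_trans (hMeq ▸ h2) hzreach
        have hzlt : z < x := lt_trans hzM hx
        have : G.Adj z (mxN G z) := adj_mxN G (lt_of_lt_of_le hzlt h3)
        rcases eq_or_lt_of_le h3 with rfl | hlt
        · exact this
        · exact adjL G hG this hzlt h3
      rcases le_or_gt u z with huz | huz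
      · -- z is within the infected interval
        have hzmem : z ∈ pIter G S (t + (j + 1)) := ih z huz hzM.le
        exact mem_pIter_two G S hzmem hMmem (ne_of_lt hzM) hzx hMx
      · -- z below u : use u as second infected neighbor instead
        have hux : G.Adj u x :=
          adjR G hG hzx huz.le (lt_of_le_of_lt (self_le_iter G u (j + 1)) hx)
        have h1M : (mxN G)^[1] u ≤ M := iter_mono_k G hG u (by omega)
        rw [Function.iterate_one] at h1M
        have huM : u < M := lt_of_lt_of_le huv ((le_mxN G (Or.inr hadj)).trans h1M)
        have humem : u ∈ pIter G S (t + (j + 1)) := pIter_mono_time G S (by omega) hu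
        exact mem_pIter_two G S humem hMmem (ne_of_lt huM) hux hMx
end Helpers5

section Helpers6
variable [Fintype V] [LinearOrder V] (G : SimpleGraph V)

lemma sweep_cover (hG : IsUnitIntervalOrder G) (hconn : G.Connected)
    (hclq : ∀ s t : Set V, IsMaxClique G s → IsMaxClique G t → (s ∩ t).Nonempty →
      2 ≤ (s ∩ t).ncard)
    {vR : V} (hR : ∀ x, x ≤ vR) {S : Set V} {t : ℕ} {u v : V}
    (hadj : G.Adj u v) (huv : u < v) (hu : u ∈ pIter G S t) (hv : v ∈ pIter G S t)
    {x : V} {k : ℕ} (h1 : u ≤ x) (h2 : G.dist u vR ≤ k) : x ∈ pIter G S (t + k) :=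
  sweep_iter G hG hconn hclq hR hadj huv hu hv k x h1
    ((hR x).trans (le_iter_of_dist G hG hconn h2))

lemma adj_extremes (hG : IsUnitIntervalOrder G) (hconn : G.Connected)
    {vL vR vL' : V} (hR : ∀ x, x ≤ vR)
    (hsucc : vL < vL' ∧ ∀ x, vL < x → vL' ≤ x) (hLR : vL < vR) : G.Adj vL vL' := by
  obtain ⟨hlt, hadj⟩ := adj_mxN_of_lt G hG hconn hR hLR
  have h1 : vL' ≤ mxN G vL := hsucc.2 _ hlt
  rcases eq_or_lt_of_le h1 with rfl | h2
  · exact hadj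
  · exact adjL G hG hadj hsucc.1 h1

lemma pIter_left (hG : IsUnitIntervalOrder G) (hconn : G.Connected)
    (hclq : ∀ s t : Set V, IsMaxClique G s → IsMaxClique G t → (s ∩ t).Nonempty →
      2 ≤ (s ∩ t).ncard)
    {vL vR vL' : V} (hL : ∀ x, vL ≤ x) (hR : ∀ x, x ≤ vR)
    (hsucc : vL < vL' ∧ ∀ x, vL < x → vL' ≤ x) (hLR : vL < vR) :
    ∀ k, 1 ≤ k → pIter G {vL, vL'} k = {x | x ≤ (mxN G)^[k] vL} := by
  have hadjLL : G.Adj vL vL' := adj_extremes G hG hconn hR hsucc hLR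
  have hL'le : vL' ≤ mxN G vL := le_mxN G (Or.inr hadjLL)
  have hstep : ∀ (T : Set V) (m : ℕ), T ⊆ {x | x ≤ (mxN G)^[m] vL} →
      pInterval G T ⊆ {x | x ≤ (mxN G)^[m + 1] vL} := by
    intro T m hT v hv
    rcases hv with hv | ⟨u, w, hne, hu, hw, h1, h2⟩
    · exact le_trans (hT hv) (iter_le_iter_succ G hG vL m)
    · calc v ≤ mxN G u := le_mxN G (Or.inr h1)
      _ ≤ mxN G ((mxN G)^[m] vL) := mxN_mono G hG (hT hu)
      _ = (mxN G)^[m + 1] vL := (Function.iterate_succ_apply' _ _ _).symm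
  have hbase : pIter G {vL, vL'} 1 ⊆ {x | x ≤ (mxN G)^[1] vL} := by
    intro v hv
    show v ≤ (mxN G)^[1] vL
    rw [Function.iterate_one]
    rcases hv with hv | ⟨u, w, hne, hu, hw, h1, h2⟩
    · rcases hv with rfl | rfl
      · exact self_le_mxN G v
      · exact hL'le
    · have hadjv : G.Adj vL v := by
        rcases hu with rfl | rfl
        · exact h1
        · rcases hw with rfl | rfl
          · exact h2
          · exact absurd rfl hne
      exact le_mxN G (Or.inr hadjv)
  have hsub : ∀ k, 1 ≤ k → pIter G {vL, vL'} k ⊆ {x | x ≤ (mxN G)^[k] vL} := by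
    intro k hk
    induction k with
    | zero => omega
    | succ k ih =>
      rcases Nat.eq_zero_or_pos k with rfl | hkpos
      · exact hbase
      · exact hstep _ k (ih hkpos)
  intro k hk
  apply Set.Subset.antisymm (hsub k hk)
  intro x hx
  have := sweep_iter G hG hconn hclq hR hadjLL hsucc.1
    (show vL ∈ pIter G {vL, vL'} 0 from Set.mem_insert _ _)
    (show vL' ∈ pIter G {vL, vL'} 0 from Set.mem_insert_of_mem _ rfl)
    k x (hL x) hx
  simpa using this

lemma percolates_left (hG : IsUnitIntervalOrder G) (hconn : G.Connected)
    (hcard : 3 ≤ Fintype.card V)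
    (hclq : ∀ s t : Set V, IsMaxClique G s → IsMaxClique G t → (s ∩ t).Nonempty →
      2 ≤ (s ∩ t).ncard)
    {vL vR vL' : V} (hL : ∀ x, vL ≤ x) (hR : ∀ x, x ≤ vR)
    (hsucc : vL < vL' ∧ ∀ x, vL < x → vL' ≤ x) (hLR : vL < vR) :
    Percolates G {vL, vL'} ∧ percTime G {vL, vL'} = G.dist vL vR := by
  set d := G.dist vL vR with hd
  have hdpos : 0 < d := hconn.pos_dist_of_ne (ne_of_lt hLR)
  have hRle : vR ≤ (mxN G)^[d] vL := le_iter_of_dist G hG hconn le_rfl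
  have hmem : pIter G {vL, vL'} d = Set.univ := by
    rw [pIter_left G hG hconn hclq hL hR hsucc hLR d hdpos]
    exact Set.eq_univ_of_forall fun x => (hR x).trans hRle
  refine ⟨⟨d, hmem⟩, ?_⟩
  apply le_antisymm (Nat.sInf_le hmem)
  apply le_csInf ⟨d, hmem⟩
  intro k hk
  simp only [Set.mem_setOf_eq] at hk
  rcases Nat.eq_zero_or_pos k with rfl | hkpos
  · exfalso
    have h2 : ({vL, vL'} : Set V) = Set.univ := hk
    have h3 : (Set.univ : Set V).ncard = Fintype.card V := by
      rw [Set.ncard_univ, Nat.card_eq_fintype_card]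
    have h4 : ({vL, vL'} : Set V).ncard ≤ 2 := by
      apply le_trans (Set.ncard_insert_le _ _)
      simp
    have h5 : ({vL, vL'} : Set V).ncard = (Set.univ : Set V).ncard := by rw [h2]
    omega
  · have : vR ≤ (mxN G)^[k] vL := by
      have := (pIter_left G hG hconn hclq hL hR hsucc hLR k hkpos) ▸ hk
      exact (Set.eq_univ_iff_forall.mp this vR : vR ∈ {x | x ≤ (mxN G)^[k] vL})
    exact dist_le_of_le_iter G hG hconn (hL vR) this

lemma dist_le_extremes (hG : IsUnitIntervalOrder G) (hconn : G.Connected)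
    {vL vR : V} (hL : ∀ x, vL ≤ x) (hR : ∀ x, x ≤ vR) (u v : V) :
    G.dist u v ≤ G.dist vL vR := by
  have key : ∀ a b : V, a ≤ b → G.dist a b ≤ G.dist vL vR := by
    intro a b hab
    have h1 : b ≤ (mxN G)^[G.dist vL b] vL := le_iter_of_dist G hG hconn le_rfl
    have h2 : G.dist a b ≤ G.dist vL b :=
      dist_le_of_le_iter G hG hconn hab
        (h1.trans (iter_mono_arg G hG (hL a) _))
    have h3 : G.dist vL b ≤ G.dist vL vR :=
      dist_le_of_le_iter G hG hconn (hL b)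
        ((hR b).trans (le_iter_of_dist G hG hconn le_rfl))
    exact h2.trans h3
  rcases le_total u v with h | h
  · exact key u v h
  · rw [SimpleGraph.dist_comm]
    exact key v u h

lemma exists_peak (hG : IsUnitIntervalOrder G) (hconn : G.Connected)
    {vL vR : V} (hL : ∀ x, vL ≤ x) (hR : ∀ x, x ≤ vR) (hLR : vL < vR) :
    ∃ P : V, (∀ z, P < z → G.Adj P z) ∧
      ∀ x, x ≤ P → G.dist vL x ≤ G.dist vL vR - 1 := by
  set d := G.dist vL vR with hd
  have hdpos : 0 < d := hconn.pos_dist_of_ne (ne_of_lt hLR)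
  refine ⟨(mxN G)^[d - 1] vL, ?_, ?_⟩
  · intro z hz
    have h1 : z ≤ mxN G ((mxN G)^[d - 1] vL) := by
      have : vR ≤ (mxN G)^[d] vL := le_iter_of_dist G hG hconn le_rfl
      have h2 : (mxN G)^[d] vL = mxN G ((mxN G)^[d - 1] vL) := by
        conv_lhs => rw [show d = (d - 1) + 1 by omega]
        rw [Function.iterate_succ_apply']
      exact (hR z).trans (h2 ▸ this)
    have hadj : G.Adj ((mxN G)^[d - 1] vL) (mxN G ((mxN G)^[d - 1] vL)) :=
      adj_mxN G (lt_of_lt_of_le hz h1)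
    rcases eq_or_lt_of_le h1 with rfl | hlt
    · exact hadj
    · exact adjL G hG hadj hz h1
  · intro x hx
    exact dist_le_of_le_iter G hG hconn (hL x) hx

end Helpers6

/-- If every two intersecting maximal cliques share at least two vertices, then the hull
sets `{v_L, v_L↑}` and `{v_R↓, v_R}` percolate in time `diam(G) = τ(G)`. -/
theorem percTime_extreme_pairs_eq_diam {V : Type*} [Fintype V] [LinearOrder V]
    (G : SimpleGraph V) (hG : IsUnitIntervalOrder G) (hconn : G.Connected)
    (hcard : 3 ≤ Fintype.card V)
    (hclq : ∀ s t : Set V, IsMaxClique G s → IsMaxClique G t → (s ∩ t).Nonempty →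
      2 ≤ (s ∩ t).ncard)
    (vL vR vL' vR' : V) (hL : ∀ x, vL ≤ x) (hR : ∀ x, x ≤ vR)
    (hsucc : vL < vL' ∧ ∀ x, vL < x → vL' ≤ x)
    (hpred : vR' < vR ∧ ∀ x, x < vR → x ≤ vR') :
    Percolates G {vL, vL'} ∧ Percolates G {vR', vR} ∧
      percTime G {vL, vL'} = G.diam ∧ percTime G {vR', vR} = G.diam ∧
      percolationTime G = G.diam := by
  classical
  -- dual hypotheses
  have hG' : IsUnitIntervalOrder (V := Vᵒᵈ) G :=
    fun v x y z h1 h2 hxy hyz => hG v z y x h2 h1 hyz hxy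
  have hcard' : 3 ≤ Fintype.card Vᵒᵈ :=
    le_trans hcard (le_of_eq (Fintype.card_congr OrderDual.toDual))
  -- vL < vR
  have hLR : vL < vR := by
    rcases lt_or_eq_of_le (hL vR) with h | h
    · exact h
    · exfalso
      have hall : ∀ x : V, x = vL := fun x => le_antisymm (h ▸ hR x) (hL x)
      have : Fintype.card V ≤ 1 :=
        Fintype.card_le_one_iff.mpr fun a b => by rw [hall a, hall b]
      omega
  set d := G.dist vL vR with hd
  have hdpos : 0 < d := hconn.pos_dist_of_ne (ne_of_lt hLR)
  have hd1 : 1 + (d - 1) = d := by omega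
  have hadjLL : G.Adj vL vL' := adj_extremes G hG hconn hR hsucc hLR
  -- left and right percolation results
  have E1 := percolates_left G hG hconn hcard hclq hL hR hsucc hLR
  have E1d : Percolates G {vR, vR'} ∧ percTime G {vR, vR'} = G.dist vR vL :=
    percolates_left (V := Vᵒᵈ) G hG' hconn hcard' hclq
      (vL := vR) (vR := vL) (vL' := vR') hR hL ⟨hpred.1, fun x hx => hpred.2 x hx⟩ hLR
  have E2 : ∀ u v, G.dist u v ≤ d := dist_le_extremes G hG hconn hL hR
  -- dual sweep
  have sweepDown : ∀ (S : Set V) (t : ℕ) (u v : V), G.Adj u v → v < u →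
      u ∈ pIter G S t → v ∈ pIter G S t → ∀ (x : V) (k : ℕ), x ≤ u →
      G.dist u vL ≤ k → x ∈ pIter G S (t + k) := by
    intro S t u v h1 h2 h3 h4 x k h5 h6
    exact sweep_cover (V := Vᵒᵈ) G hG' hconn hclq (vR := vL) hL
      (S := S) (t := t) h1 h2 h3 h4 h5 h6
  -- percolation time upper bound for every hull set
  have hb : ∀ S : Set V, Percolates G S → percTime G S ≤ d := by
    intro S hS
    suffices h : pIter G S d = Set.univ by exact Nat.sInf_le h
    by_cases hpair : ∃ a b, a ∈ S ∧ b ∈ S ∧ G.Adj a b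
    · obtain ⟨a, b, ha, hbS, hab⟩ := hpair
      have main : ∀ a b, a ∈ S → b ∈ S → G.Adj a b → a < b → pIter G S d = Set.univ := by
        intro a b ha hbS hab hlt
        apply Set.eq_univ_of_forall
        intro x
        rcases le_or_gt a x with hx | hx
        · have := sweep_cover G hG hconn hclq hR (S := S) (t := 0) hab hlt ha hbS hx
            (E2 a vR)
          simpa using this
        · have := sweepDown S 0 b a hab.symm hlt hbS ha x d (hx.trans hlt).le (E2 b vL)
          simpa using this
      rcases lt_or_gt_of_ne hab.ne with hlt | hlt
      · exact main a b ha hbS hab hlt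
      · exact main b a hbS ha hab.symm hlt
    · -- S is pairwise non-adjacent
      push_neg at hpair
      have hSne : S ≠ Set.univ := by
        intro h
        exact hpair vL vL' (h ▸ Set.mem_univ vL) (h ▸ Set.mem_univ vL') hadjLL
      have hPne : pInterval G S ≠ S := by
        intro h
        have hall : ∀ k, pIter G S k = S := by
          intro k
          induction k with
          | zero => rfl
          | succ k ih => show pInterval G (pIter G S k) = S; rw [ih]; exact h
        obtain ⟨k, hk⟩ := hS
        exact hSne ((hall k).symm.trans hk)
      obtain ⟨v, hvP, hvS⟩ :=
        Set.exists_of_ssubset ((Set.subset_union_left).ssubset_of_ne (Ne.symm hPne))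
      rcases hvP with hvS' | ⟨u, w, hne', hu, hw, h1, h2⟩
      · exact absurd hvS' hvS
      have main2 : ∀ u w, u ∈ S → w ∈ S → G.Adj u v → G.Adj w v → u < w →
          pIter G S d = Set.univ := by
        intro u w hu hw h1 h2 huw
        -- u < v < w
        have hvu : v ≠ u := fun h => hvS (h ▸ hu)
        have hvw' : v ≠ w := fun h => hvS (h ▸ hw)
        have hulv : u < v := by
          by_contra hcon
          push_neg at hcon
          have hvltu : v < u := lt_of_le_of_ne hcon hvu
          exact hpair u w hu hw (adjR G hG h2.symm.symm.symm hvltu.le huw)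
        have hvw : v < w := by
          by_contra hcon
          push_neg at hcon
          have hwv : w < v := lt_of_le_of_ne hcon (Ne.symm hvw')
          exact hpair u w hu hw (adjL G hG h1 huw hwv.le)
        have huwne : u ≠ w := ne_of_lt huw
        have hv1 : v ∈ pIter G S 1 := Or.inr ⟨u, w, huwne, hu, hw, h1, h2⟩
        have hu1 : u ∈ pIter G S 1 := subset_pIter_succ G S 0 hu
        have hw1 : w ∈ pIter G S 1 := subset_pIter_succ G S 0 hw
        apply Set.eq_univ_of_forall
        intro x
        rcases le_total x v with hxv | hxv
        · -- downward side
          by_cases hgood : G.dist v vL ≤ d - 1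
          · have := sweepDown S 1 v u h1.symm hulv hv1 hu1 x (d - 1) hxv hgood
            rwa [hd1] at this
          · obtain ⟨P, hP1, hP2⟩ := exists_peak G hG hconn hL hR hLR
            have hPv : P < v := by
              by_contra hcon
              push_neg at hcon
              have := hP2 v hcon
              rw [SimpleGraph.dist_comm] at this
              exact hgood this
            -- q = minimal neighbor of w
            set q := (Finset.univ.filter fun z : V => z = w ∨ G.Adj w z).min'
              ⟨w, by simp⟩ with hqdef
            have hqle : ∀ z, (z = w ∨ G.Adj w z) → q ≤ z := fun z h =>
              Finset.min'_le _ _ (Finset.mem_filter.mpr ⟨Finset.mem_univ z, h⟩)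
            have hqspec : q = w ∨ G.Adj w q := by
              have := Finset.min'_mem
                (Finset.univ.filter fun z : V => z = w ∨ G.Adj w z) ⟨w, by simp⟩
              simpa using this
            have hqv : q ≤ v := hqle v (Or.inr h2)
            have hqP : q ≤ P := hqle P (Or.inr (hP1 w (hPv.trans hvw)).symm)
            have huq : u < q := by
              by_contra hcon
              push_neg at hcon
              have hqw : G.Adj w q := by
                rcases hqspec with hh | hh
                · exact absurd (hh ▸ hcon) (not_le_of_gt (hulv.trans hvw))
                · exact hh
              exact hpair u w hu hw (adjR G hG hqw.symm hcon (hulv.trans hvw))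
            have hadjuq : G.Adj u q := by
              rcases eq_or_lt_of_le hqv with heq | hlt
              · exact heq ▸ h1
              · exact adjL G hG h1 huq hqv
            have hadjwq : G.Adj w q := by
              rcases hqspec with hh | hh
              · exact absurd (hh ▸ hqv) (not_le_of_gt hvw)
              · exact hh
            have hqmem : q ∈ pIter G S 1 :=
              Or.inr ⟨u, w, huwne, hu, hw, hadjuq, hadjwq⟩
            rcases le_or_gt x q with hxq | hxq
            · have hdq : G.dist q vL ≤ d - 1 := by
                rw [SimpleGraph.dist_comm]; exact hP2 q hqP
              have := sweepDown S 1 q u hadjuq.symm huq hqmem hu1 x (d - 1) hxq hdq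
              rwa [hd1] at this
            · rcases eq_or_lt_of_le hxv with rfl | hxv'
              · exact pIter_mono_time G S hdpos hv1
              · have hadjux : G.Adj u x := adjL G hG h1 (huq.trans hxq) hxv
                have hadjwx : G.Adj w x :=
                  (adjR G hG hadjwq.symm hxq.le (hxv'.trans hvw)).symm
                exact pIter_mono_time G S hdpos
                  (Or.inr ⟨u, w, huwne, hu, hw, hadjux, hadjwx⟩ : x ∈ pIter G S 1)
        · -- upward side
          by_cases hgood : G.dist v vR ≤ d - 1
          · have := sweep_cover G hG hconn hclq hR (S := S) (t := 1) h2.symm hvw hv1 hw1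
              hxv hgood
            rwa [hd1] at this
          · obtain ⟨P', hP1', hP2'⟩ :
                ∃ P : V, (∀ z : V, z < P → G.Adj P z) ∧
                  (∀ x : V, P ≤ x → G.dist vR x ≤ G.dist vR vL - 1) :=
              exists_peak (V := Vᵒᵈ) G hG' hconn (vL := vR) (vR := vL) hR hL hLR
            have hdrl : G.dist vR vL = d := SimpleGraph.dist_comm
            have hP'v : v < P' := by
              by_contra hcon
              push_neg at hcon
              have h5 := hP2' v hcon
              rw [hdrl, SimpleGraph.dist_comm (u := vR) (v := v)] at h5
              exact hgood h5
            -- q' = maximal neighbor of u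
            set q' := (Finset.univ.filter fun z : V => z = u ∨ G.Adj u z).max'
              ⟨u, by simp⟩ with hq'def
            have hq'ge : ∀ z, (z = u ∨ G.Adj u z) → z ≤ q' := fun z h =>
              Finset.le_max' _ _ (Finset.mem_filter.mpr ⟨Finset.mem_univ z, h⟩)
            have hq'spec : q' = u ∨ G.Adj u q' := by
              have := Finset.max'_mem
                (Finset.univ.filter fun z : V => z = u ∨ G.Adj u z) ⟨u, by simp⟩
              simpa using this
            have hq'v : v ≤ q' := hq'ge v (Or.inr h1)
            have hq'P : P' ≤ q' := hq'ge P' (Or.inr (hP1' u (hulv.trans hP'v)).symm)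
            have hadjuq' : G.Adj u q' := by
              rcases hq'spec with hh | hh
              · exact absurd (hh ▸ hq'v) (not_le_of_gt hulv)
              · exact hh
            have hq'w : q' < w := by
              by_contra hcon
              push_neg at hcon
              rcases eq_or_lt_of_le hcon with heq | hlt
              · exact hpair u w hu hw (heq ▸ hadjuq')
              · exact hpair u w hu hw (adjL G hG hadjuq' (hulv.trans hvw) hcon)
            have hadjq'w : G.Adj q' w := adjR G hG h2.symm hq'v hq'w
            have hq'mem : q' ∈ pIter G S 1 :=
              Or.inr ⟨u, w, huwne, hu, hw, hadjuq', hadjq'w.symm⟩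
            rcases le_or_gt q' x with hq'x | hq'x
            · have hdq' : G.dist q' vR ≤ d - 1 := by
                have h5 := hP2' q' hq'P
                rw [hdrl, SimpleGraph.dist_comm (u := vR) (v := q')] at h5
                exact h5
              have := sweep_cover G hG hconn hclq hR (S := S) (t := 1) hadjq'w hq'w
                hq'mem hw1 hq'x hdq'
              rwa [hd1] at this
            · rcases eq_or_lt_of_le hxv with rfl | hxv'
              · exact pIter_mono_time G S hdpos hv1
              · have hadjux : G.Adj u x := adjL G hG hadjuq' (hulv.trans hxv') hq'x.le
                have hadjwx : G.Adj w x :=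
                  (adjR G hG h2.symm hxv (hq'x.trans hq'w)).symm
                exact pIter_mono_time G S hdpos
                  (Or.inr ⟨u, w, huwne, hu, hw, hadjux, hadjwx⟩ : x ∈ pIter G S 1)
      rcases lt_or_gt_of_ne hne' with hlt | hlt
      · exact main2 u w hu hw h1 h2 hlt
      · exact main2 w u hw hu h2 h1 hlt
  -- diameter
  haveI : Nonempty V := ⟨vL⟩
  have hnet : G.ediam ≠ ⊤ := by
    obtain ⟨u, v, huv⟩ := exists_edist_eq_ediam_of_finite (G := G)
    rw [← huv]
    exact (edist_ne_top_iff_reachable).mpr (hconn u v)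
  have hdiam : G.diam = d := by
    apply le_antisymm
    · obtain ⟨u, v, huv⟩ := exists_dist_eq_diam (G := G)
      rw [← huv]; exact E2 u v
    · exact dist_le_diam hnet
  -- percolation time of the whole graph
  have hmemd : d ∈ {t | ∃ S : Set V, Percolates G S ∧ percTime G S = t} :=
    ⟨{vL, vL'}, E1.1, E1.2⟩
  have hub : ∀ t ∈ {t | ∃ S : Set V, Percolates G S ∧ percTime G S = t}, t ≤ d := by
    rintro t ⟨S, hS, rfl⟩
    exact hb S hS
  have hpt : percolationTime G = d :=
    le_antisymm (csSup_le ⟨d, hmemd⟩ hub) (le_csSup ⟨d, hub⟩ hmemd)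
  refine ⟨E1.1, ?_, ?_, ?_, ?_⟩
  · rw [Set.pair_comm vR' vR]; exact E1d.1
  · rw [hdiam]; exact E1.2
  · rw [Set.pair_comm vR' vR, hdiam]
    rw [E1d.2]
    exact SimpleGraph.dist_comm
  · rw [hdiam]; exact hpt
end
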